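/- arXiv:2011.04273 — 9 statements merged into one kernel-verified Lean document; each statement's English description precedes it below -/
import Mathlib

section
/- Consider a packing of items into OPT bins where each bin contains at most 1/ε^k large items from small groups, each small group contains at most ε^{k+2}·OPT large items, and for a conflicting item ℓ of size s_ℓ there are ⌊2ε·OPT⌋ − 1 other items of the same rounded size in other bins. If 0 < ε < 1/2 and OPT > 3/ε^{k+2}, then the number of items y of size s_ℓ for which swapping ℓ and y is 'bad' is at most 2ε²·OPT, and 2ε²·OPT < ⌊2ε·OPT⌋ − 2, so a good swap exists. -/
/-- A swap of the conflicting item `ℓ` with an item `y` of equal (rounded) size is *bad*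
if it would create a conflict: `y`'s bin equals `ℓ`'s bin, or some other item in `ℓ`'s bin
belongs to `y`'s group, or some other item in `y`'s bin belongs to `ℓ`'s group. -/
def BadSwap {I B : Type*} (bin : I → B) (grp : I → ℕ) (ℓ y : I) : Prop :=
  bin y = bin ℓ ∨
  (∃ z, z ≠ ℓ ∧ bin z = bin ℓ ∧ grp z = grp y) ∨
  (∃ z, z ≠ y ∧ bin z = bin y ∧ grp z = grp ℓ)

/-- Consider a packing of items into `OPT` bins where each bin contains at most `1/ε^k`
(large) items, each (small) group contains at most `ε^(k+2)·OPT` (large) items, and for a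
conflicting item `ℓ` of size `s ℓ` there are `⌊2ε·OPT⌋ − 1` other items of the same rounded
size.  If `0 < ε < 1/2` and `OPT > 3/ε^(k+2)`, then the number of items `y` of size `s ℓ`
for which swapping `ℓ` and `y` is bad is at most `2ε²·OPT`, and
`2ε²·OPT < ⌊2ε·OPT⌋ − 2`, so a good swap exists. -/
theorem stmt_4 {I B : Type*} [Fintype I] [Fintype B] (OPT : ℕ) (hB : Fintype.card B = OPT)
    (bin : I → B) (grp : I → ℕ) (s : I → ℝ) (ε : ℝ) (k : ℕ)
    (hε : 0 < ε ∧ ε < 1 / 2) (hOPT : 3 / ε ^ (k + 2) < (OPT : ℝ))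
    (hbin : ∀ b : B, ({i : I | bin i = b}.ncard : ℝ) ≤ 1 / ε ^ k)
    (hgrp : ∀ g : ℕ, ({i : I | grp i = g}.ncard : ℝ) ≤ ε ^ (k + 2) * OPT)
    (ℓ : I)
    (hsame : {y : I | y ≠ ℓ ∧ s y = s ℓ}.ncard = ⌊2 * ε * (OPT : ℝ)⌋₊ - 1) :
    ({y : I | y ≠ ℓ ∧ s y = s ℓ ∧ BadSwap bin grp ℓ y}.ncard : ℝ) ≤ 2 * ε ^ 2 * OPT ∧
    2 * ε ^ 2 * (OPT : ℝ) < (⌊2 * ε * (OPT : ℝ)⌋₊ : ℝ) - 2 ∧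
    ∃ y : I, y ≠ ℓ ∧ s y = s ℓ ∧ ¬ BadSwap bin grp ℓ y := by
  classical
  obtain ⟨hε0, hε2⟩ := hε
  have hεk : (0:ℝ) < ε ^ k := pow_pos hε0 k
  have hεk2 : (0:ℝ) < ε ^ (k+2) := pow_pos hε0 _
  -- ncard = filter card
  have hnc : ∀ (p : I → Prop) (h : DecidablePred p),
      {i : I | p i}.ncard = (@Finset.filter I p h Finset.univ).card := by
    intro p h
    rw [Set.ncard_eq_toFinset_card']
    simp [Set.toFinset_setOf, Finset.filter_congr_decidable]
  -- basic: ε^{k+2} OPT > 3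
  have hO3 : 3 < ε ^ (k+2) * OPT := by
    rw [div_lt_iff₀ hεk2] at hOPT; linarith [hOPT]
  have hεle1 : ε ≤ 1 := by linarith
  have hεk2le : ε ^ (k+2) ≤ ε := by
    calc ε ^ (k+2) ≤ ε ^ 1 := pow_le_pow_of_le_one (le_of_lt hε0) hεle1 (by omega)
    _ = ε := pow_one ε
  have hOpos : (0:ℝ) ≤ (OPT:ℝ) := Nat.cast_nonneg _
  have hεO3 : 3 < ε * OPT := by
    calc (3:ℝ) < ε ^ (k+2) * OPT := hO3
    _ ≤ ε * OPT := by apply mul_le_mul_of_nonneg_right hεk2le hOpos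
  -- Part 1 : card bound
  set T := Finset.univ.filter (fun z : I => z ≠ ℓ ∧ bin z = bin ℓ) with hT
  set G := Finset.univ.filter (fun z : I => grp z = grp ℓ) with hG
  set A := T.biUnion (fun z => Finset.univ.filter (fun y : I => grp y = grp z)) with hA
  set C := G.biUnion (fun z => Finset.univ.filter (fun y : I => bin y = bin z)) with hC
  set Bad := Finset.univ.filter (fun y : I => y ≠ ℓ ∧ s y = s ℓ ∧ BadSwap bin grp ℓ y) with hBad
  have hsub : Bad ⊆ A ∪ C := by
    intro y hy
    simp only [hBad, Finset.mem_filter, Finset.mem_univ, true_and] at hy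
    obtain ⟨hyℓ, hsy, hb⟩ := hy
    rcases hb with h1 | ⟨z, hz1, hz2, hz3⟩ | ⟨z, hz1, hz2, hz3⟩
    · apply Finset.mem_union_left
      simp only [hA, Finset.mem_biUnion]
      exact ⟨y, by simp [hT, hyℓ, h1], by simp⟩
    · apply Finset.mem_union_left
      simp only [hA, Finset.mem_biUnion]
      exact ⟨z, by simp [hT, hz1, hz2], by simp [hz3]⟩
    · apply Finset.mem_union_right
      simp only [hC, Finset.mem_biUnion]
      exact ⟨z, by simp [hG, hz3], by simp [hz2]⟩
  have hTcard : (T.card : ℝ) ≤ 1 / ε ^ k := by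
    calc (T.card : ℝ) ≤ ((Finset.univ.filter (fun i : I => bin i = bin ℓ)).card : ℝ) := by
          exact_mod_cast Nat.cast_le.mpr (Finset.card_le_card (by
            intro z hz
            simp only [hT, Finset.mem_filter, Finset.mem_univ, true_and] at hz ⊢
            exact hz.2))
      _ ≤ 1 / ε ^ k := by rw [← hnc _ _]; exact hbin (bin ℓ)
  have hGcard : (G.card : ℝ) ≤ ε ^ (k+2) * OPT := by
    rw [hG, ← hnc]; exact hgrp (grp ℓ)
  have hAcard : (A.card : ℝ) ≤ ε ^ 2 * OPT := by
    have h1 : (A.card : ℝ) ≤ ∑ z ∈ T, ((Finset.univ.filter (fun y : I => grp y = grp z)).card : ℝ) := by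
      exact_mod_cast Nat.cast_le.mpr (Finset.card_biUnion_le)
    have h2 : ∑ z ∈ T, ((Finset.univ.filter (fun y : I => grp y = grp z)).card : ℝ)
        ≤ ∑ _z ∈ T, ε ^ (k+2) * OPT := by
      apply Finset.sum_le_sum
      intro z _
      rw [← hnc _ _]; exact hgrp (grp z)
    rw [Finset.sum_const, nsmul_eq_mul] at h2
    have h3 : (T.card : ℝ) * (ε ^ (k+2) * OPT) ≤ (1 / ε ^ k) * (ε ^ (k+2) * OPT) := by
      apply mul_le_mul_of_nonneg_right hTcard
      positivity
    have h4 : (1 / ε ^ k) * (ε ^ (k+2) * (OPT:ℝ)) = ε ^ 2 * OPT := by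
      field_simp
      ring
    linarith
  have hCcard : (C.card : ℝ) ≤ ε ^ 2 * OPT := by
    have h1 : (C.card : ℝ) ≤ ∑ z ∈ G, ((Finset.univ.filter (fun y : I => bin y = bin z)).card : ℝ) := by
      exact_mod_cast Nat.cast_le.mpr (Finset.card_biUnion_le)
    have h2 : ∑ z ∈ G, ((Finset.univ.filter (fun y : I => bin y = bin z)).card : ℝ)
        ≤ ∑ _z ∈ G, 1 / ε ^ k := by
      apply Finset.sum_le_sum
      intro z _
      rw [← hnc _ _]; exact hbin (bin z)
    rw [Finset.sum_const, nsmul_eq_mul] at h2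
    have h3 : (G.card : ℝ) * (1 / ε ^ k) ≤ (ε ^ (k+2) * OPT) * (1 / ε ^ k) := by
      apply mul_le_mul_of_nonneg_right hGcard
      positivity
    have h4 : (ε ^ (k+2) * (OPT:ℝ)) * (1 / ε ^ k) = ε ^ 2 * OPT := by
      field_simp
      ring
    linarith
  have part1 : ({y : I | y ≠ ℓ ∧ s y = s ℓ ∧ BadSwap bin grp ℓ y}.ncard : ℝ) ≤ 2 * ε ^ 2 * OPT := by
    rw [hnc _ _]
    calc ((Finset.univ.filter (fun y : I => y ≠ ℓ ∧ s y = s ℓ ∧ BadSwap bin grp ℓ y)).card : ℝ)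
        ≤ ((A ∪ C).card : ℝ) := by exact_mod_cast Nat.cast_le.mpr (Finset.card_le_card hsub)
      _ ≤ (A.card : ℝ) + C.card := by exact_mod_cast Nat.cast_le.mpr (Finset.card_union_le A C)
      _ ≤ 2 * ε ^ 2 * OPT := by linarith
  -- Part 2
  have hfl : 2 * ε * (OPT:ℝ) - 1 < (⌊2 * ε * (OPT : ℝ)⌋₊ : ℝ) := Nat.sub_one_lt_floor _
  have part2 : 2 * ε ^ 2 * (OPT : ℝ) < (⌊2 * ε * (OPT : ℝ)⌋₊ : ℝ) - 2 := by
    have h3 : (1 - 2*ε) * (ε * OPT) ≥ 0 := by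
      apply mul_nonneg (by linarith) (by positivity)
    nlinarith [hεO3]
  refine ⟨part1, part2, ?_⟩
  -- Part 3
  by_contra hcon
  push_neg at hcon
  have hsubset : {y : I | y ≠ ℓ ∧ s y = s ℓ} ⊆ {y : I | y ≠ ℓ ∧ s y = s ℓ ∧ BadSwap bin grp ℓ y} := by
    intro y hy
    exact ⟨hy.1, hy.2, hcon y hy.1 hy.2⟩
  have hle : {y : I | y ≠ ℓ ∧ s y = s ℓ}.ncard ≤ {y : I | y ≠ ℓ ∧ s y = s ℓ ∧ BadSwap bin grp ℓ y}.ncard :=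
    Set.ncard_le_ncard hsubset (Set.toFinite _)
  -- floor ≥ 6
  have hfl6 : 6 ≤ ⌊2 * ε * (OPT : ℝ)⌋₊ := by
    apply Nat.le_floor
    push_cast
    linarith
  have hcast : (({y : I | y ≠ ℓ ∧ s y = s ℓ}.ncard : ℝ)) = (⌊2 * ε * (OPT : ℝ)⌋₊ : ℝ) - 1 := by
    rw [hsame]
    have : (1:ℕ) ≤ ⌊2 * ε * (OPT : ℝ)⌋₊ := by omega
    push_cast [Nat.cast_sub this]
    ring
  have : ((⌊2 * ε * (OPT : ℝ)⌋₊ : ℝ) - 1) ≤ 2 * ε ^ 2 * OPT := by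
    rw [← hcast]
    calc (({y : I | y ≠ ℓ ∧ s y = s ℓ}.ncard : ℝ))
        ≤ (({y : I | y ≠ ℓ ∧ s y = s ℓ ∧ BadSwap bin grp ℓ y}.ncard : ℝ)) := by exact_mod_cast hle
      _ ≤ 2 * ε ^ 2 * OPT := part1
  linarith
end

section
/- Let P_A = {x ∈ ℝ^n_{≥0} : A x ≤ b} where A is a totally unimodular integer matrix and b is an integral vector. Then every vertex (extreme point) of the polytope P_A is integral. -/
open Matrix

/-- Let `P_A = {x ∈ ℝⁿ, x ≥ 0, A x ≤ b}` where `A` is a totally unimodular integer matrix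
and `b` is an integral vector.  Then every vertex (extreme point, i.e. a point of `P_A`
that is not the midpoint of two distinct points of `P_A`) of the polytope `P_A` is
integral. -/
theorem stmt_6 {m n : ℕ} (A : Matrix (Fin m) (Fin n) ℤ) (b : Fin m → ℤ)
    (hTU : A.IsTotallyUnimodular)
    (x : Fin n → ℝ)
    (hx : (∀ i, 0 ≤ x i) ∧ ∀ i, (A.map (Int.cast : ℤ → ℝ)).mulVec x i ≤ (b i : ℝ))
    (hvertex : ∀ y z : Fin n → ℝ,
      ((∀ i, 0 ≤ y i) ∧ ∀ i, (A.map (Int.cast : ℤ → ℝ)).mulVec y i ≤ (b i : ℝ)) →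
      ((∀ i, 0 ≤ z i) ∧ ∀ i, (A.map (Int.cast : ℤ → ℝ)).mulVec z i ≤ (b i : ℝ)) →
      (∀ i, x i = (y i + z i) / 2) → y = z) :
    ∀ i, ∃ q : ℤ, x i = (q : ℝ) := by
  classical
  rcases Nat.eq_zero_or_pos n with rfl | hn
  · intro i; exact i.elim0
  have : Nonempty (Fin n) := ⟨⟨0, hn⟩⟩
  -- the combined system `M x ≤ c` encoding both `A x ≤ b` and `-x ≤ 0`
  set MZ : Matrix (Fin m ⊕ Fin n) (Fin n) ℤ := fromRows A (-1) with hMZdef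
  set M : Matrix (Fin m ⊕ Fin n) (Fin n) ℝ := MZ.map (Int.cast : ℤ → ℝ) with hMdef
  set c : Fin m ⊕ Fin n → ℤ := Sum.elim b 0 with hcdef
  have hMZTU : MZ.IsTotallyUnimodular := by
    apply hTU.fromRows_unitlike
    intro _ i
    refine ⟨i, .neg, ?_⟩
    ext j
    by_cases h : i = j
    · subst h; simp [Pi.single_apply]
    · simp [Pi.single_apply, one_apply, h, Ne.symm h]
  -- feasibility of a vector in terms of `M`
  have feas : ∀ v : Fin n → ℝ,
      ((∀ i, 0 ≤ v i) ∧ ∀ i, (A.map (Int.cast : ℤ → ℝ)).mulVec v i ≤ (b i : ℝ)) ↔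
      (∀ i, M.mulVec v i ≤ (c i : ℝ)) := by
    intro v
    constructor
    · rintro ⟨h1, h2⟩ i
      rcases i with i | j
      · simpa [hMdef, hMZdef, hcdef, mulVec, dotProduct, Matrix.map_apply] using h2 i
      · simpa [hMdef, hMZdef, hcdef, mulVec, dotProduct, Matrix.map_apply, one_apply,
          Finset.sum_ite_eq] using neg_nonpos.mpr (h1 j)
    · intro h
      constructor
      · intro j
        have := h (Sum.inr j)
        simp only [hMdef, hMZdef, hcdef, mulVec, dotProduct, Matrix.map_apply] at this
        simpa [one_apply, Finset.sum_ite_eq] using this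
      · intro i
        have := h (Sum.inl i)
        simpa [hMdef, hMZdef, hcdef, mulVec, dotProduct, Matrix.map_apply] using this
  have hxfeas : ∀ i, M.mulVec x i ≤ (c i : ℝ) := (feas x).mp hx
  -- key: any direction orthogonal to all tight rows is zero
  have key : ∀ d : Fin n → ℝ, (∀ i, M.mulVec x i = (c i : ℝ) → M.mulVec d i = 0) → d = 0 := by
    intro d hd
    by_contra hd0
    set f : (Fin m ⊕ Fin n) → ℝ := fun i =>
      if M.mulVec x i = (c i : ℝ) then 1
      else ((c i : ℝ) - M.mulVec x i) / (|M.mulVec d i| + 1) with hfdef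
    have hfpos : ∀ i, 0 < f i := by
      intro i
      by_cases hi : M.mulVec x i = (c i : ℝ)
      · simp [hfdef, hi]
      · have h1 : 0 < (c i : ℝ) - M.mulVec x i := sub_pos.mpr ((hxfeas i).lt_of_ne hi)
        have h2 : 0 < |M.mulVec d i| + 1 := by positivity
        simp only [hfdef, if_neg hi]
        positivity
    set ε : ℝ := Finset.univ.inf' ⟨Sum.inr ⟨0, hn⟩, Finset.mem_univ _⟩ f with hεdef
    have hε : 0 < ε := (Finset.lt_inf'_iff _).mpr fun i _ => hfpos i
    have hεle : ∀ i, ε ≤ f i := fun i => Finset.inf'_le _ (Finset.mem_univ i)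
    have main : ∀ t : ℝ, |t| ≤ ε → ∀ i, M.mulVec (x + t • d) i ≤ (c i : ℝ) := by
      intro t ht i
      rw [mulVec_add, mulVec_smul]
      by_cases hi : M.mulVec x i = (c i : ℝ)
      · simp [hd i hi, hi]
      · have hslack : 0 < (c i : ℝ) - M.mulVec x i := sub_pos.mpr ((hxfeas i).lt_of_ne hi)
        have hden : (0:ℝ) < |M.mulVec d i| + 1 := by positivity
        have h1 : t * M.mulVec d i ≤ |t| * (|M.mulVec d i| + 1) := by
          calc t * M.mulVec d i ≤ |t * M.mulVec d i| := le_abs_self _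
            _ = |t| * |M.mulVec d i| := abs_mul _ _
            _ ≤ |t| * (|M.mulVec d i| + 1) := by
                have := abs_nonneg t
                nlinarith
        have h2 : |t| ≤ ((c i : ℝ) - M.mulVec x i) / (|M.mulVec d i| + 1) := by
          refine ht.trans ?_
          have := hεle i
          simpa [hfdef, if_neg hi] using this
        have h3 : |t| * (|M.mulVec d i| + 1) ≤ (c i : ℝ) - M.mulVec x i := by
          rw [← le_div_iff₀ hden]; exact h2
        have := h1.trans h3
        simp only [Pi.add_apply, Pi.smul_apply, smul_eq_mul]
        linarith
    have hfy := (feas (x + ε • d)).mpr (main ε (by rw [abs_of_pos hε]))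
    have hfz := (feas (x + (-ε) • d)).mpr (main (-ε) (by rw [abs_neg, abs_of_pos hε]))
    have hmid : ∀ i, x i = ((x + ε • d) i + (x + (-ε) • d) i) / 2 := by
      intro i; simp only [Pi.add_apply, Pi.smul_apply, smul_eq_mul]; ring
    have heq := hvertex _ _ hfy hfz hmid
    apply hd0
    funext j
    have := congrFun heq j
    simp only [Pi.add_apply, Pi.smul_apply, smul_eq_mul] at this
    have : ε * d j = 0 := by linarith
    exact (mul_eq_zero.mp this).resolve_left hε.ne'
  -- the tight rows span everything
  set T : Set (Fin m ⊕ Fin n) := {i | M.mulVec x i = (c i : ℝ)} with hTdef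
  set rset : Set (Fin n → ℝ) := (fun i => M i) '' T with hrdef
  have hdot : ∀ (d : Fin n → ℝ) i, M.mulVec d i = M i ⬝ᵥ d := fun d i => rfl
  have hspan : Submodule.span ℝ rset = ⊤ := by
    by_contra hne
    obtain ⟨f, hf0, hfbot⟩ := Submodule.exists_dual_map_eq_bot_of_lt_top
      (lt_top_iff_ne_top.mpr hne) inferInstance
    set d : Fin n → ℝ := fun j => f (fun j' => if j = j' then 1 else 0) with hddef
    have hfv : ∀ v : Fin n → ℝ, f v = ∑ j, v j * d j := by
      intro v
      rw [LinearMap.pi_apply_eq_sum_univ f v]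
      simp [hddef, smul_eq_mul]
    have hd0 : d = 0 := by
      apply key
      intro i hi
      have hmem : M i ∈ Submodule.span ℝ rset :=
        Submodule.subset_span ⟨i, hi, rfl⟩
      have hfMi : f (M i) = 0 :=
        (Submodule.eq_bot_iff _).mp hfbot (f (M i)) ⟨M i, hmem, rfl⟩
      rw [hdot, dotProduct]
      rw [hfv] at hfMi
      exact hfMi
    apply hf0
    apply LinearMap.ext
    intro v
    rw [hfv, hd0]
    simp
  obtain ⟨sb, hsub, hsp, hli⟩ := exists_linearIndependent ℝ rset
  rw [hspan] at hsp
  have bas : Module.Basis sb ℝ (Fin n → ℝ) := Module.Basis.mk hli (by rw [Subtype.range_coe, hsp])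
  have : Fintype sb := FiniteDimensional.fintypeBasisIndex bas
  have hcard : Fintype.card sb = n := by
    have h1 := Module.finrank_eq_card_basis bas
    rw [Module.finrank_pi ℝ] at h1
    simpa [Fintype.card_fin] using h1.symm
  set e : Fin n ≃ sb := (Fintype.equivFinOfCardEq hcard).symm with hedef
  -- pick indices of tight rows realizing the basis vectors
  have hchoice : ∀ k : Fin n, ∃ i, i ∈ T ∧ M i = (e k : Fin n → ℝ) := by
    intro k
    obtain ⟨i, hiT, hieq⟩ := hsub (e k).2
    exact ⟨i, hiT, hieq⟩
  set g : Fin n → (Fin m ⊕ Fin n) := fun k => (hchoice k).choose with hgdef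
  have hg : ∀ k, g k ∈ T ∧ M (g k) = (e k : Fin n → ℝ) := fun k => (hchoice k).choose_spec
  have hginj : Function.Injective g := by
    intro k1 k2 h
    have : (e k1 : Fin n → ℝ) = (e k2 : Fin n → ℝ) := by
      rw [← (hg k1).2, ← (hg k2).2, h]
    exact e.injective (Subtype.ext this)
  set B : Matrix (Fin n) (Fin n) ℝ := M.submatrix g id with hBdef
  set BZ : Matrix (Fin n) (Fin n) ℤ := MZ.submatrix g id with hBZdef
  have hBmap : B = BZ.map (Int.cast : ℤ → ℝ) := by
    ext k j; simp [hBdef, hBZdef, hMdef]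
  have hBrows : (fun k => B k) = (fun k => (e k : Fin n → ℝ)) := by
    funext k
    have : B k = M (g k) := by
      funext j; simp [hBdef]
    rw [this, (hg k).2]
  have hBunit : IsUnit B := by
    rw [← linearIndependent_rows_iff_isUnit]
    show LinearIndependent ℝ (fun k => B k)
    rw [hBrows]
    exact hli.comp (fun k => e k) (fun k1 k2 h => e.injective (by exact h))
  have hBdet : IsUnit B.det := (isUnit_iff_isUnit_det B).mp hBunit
  have hBZdetcast : ((BZ.det : ℤ) : ℝ) = B.det := by
    rw [hBmap]
    simpa [RingHom.mapMatrix_apply] using RingHom.map_det (Int.castRingHom ℝ) BZ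
  have hBZdet : IsUnit BZ.det := by
    obtain ⟨s, hs⟩ := hMZTU n g id hginj Function.injective_id
    rw [← hBZdef] at hs
    cases s with
    | zero =>
        exfalso
        rw [← hs] at hBZdetcast
        simp at hBZdetcast
        rw [← hBZdetcast] at hBdet
        simp at hBdet
    | pos => rw [← hs]; simp
    | neg => rw [← hs]; simp
  -- solve the square system
  have hBx : B.mulVec x = fun k => ((c (g k) : ℝ)) := by
    funext k
    have htight : M.mulVec x (g k) = (c (g k) : ℝ) := (hg k).1
    rw [← htight]
    simp [hBdef, mulVec, dotProduct, submatrix_apply]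
  set w : Fin n → ℤ := BZ⁻¹.mulVec (fun k => c (g k)) with hwdef
  have hBZw : BZ.mulVec w = fun k => c (g k) := by
    rw [hwdef, mulVec_mulVec, Matrix.mul_nonsing_inv _ hBZdet, one_mulVec]
  have hBw : B.mulVec (fun j => ((w j : ℝ))) = fun k => ((c (g k) : ℝ)) := by
    funext k
    have h := RingHom.map_mulVec (Int.castRingHom ℝ) BZ w k
    rw [hBZw] at h
    rw [hBmap]
    exact h.symm
  have hinj : Function.Injective B.mulVec := mulVec_injective_iff_isUnit.mpr hBunit
  have hxw : x = fun j => ((w j : ℝ)) := hinj (by rw [hBx, hBw])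
  intro i
  exact ⟨w i, congrFun hxw i⟩
end

section
/- Let x be a vertex of the polytope P ⊆ [0,1]^{I×T} defined by: x_{ℓ,t} = 0 whenever s_ℓ > ε·f(t); ∑_ℓ x_{ℓ,t}·s_ℓ ≤ f(t)·|t| for each t∈T; ∑_t x_{ℓ,t} = 1 for each ℓ∈I; and ∑_{ℓ∈G_j} x_{ℓ,t} ≤ L_{t,j} for each group G_j and type t. If group G_j is fractional (some x_{ℓ,t} ∈ (0,1) with ℓ∈G_j), then there exists a nonzero 'movement' vector m^j ∈ ℝ^{I×T} supported only on coordinates (ℓ,t) with ℓ∈G_j and x_{ℓ,t} ∈ (0,1), satisfying ∑_t m^j_{ℓ,t} = 0 for all ℓ, and ∑_{ℓ∈G_j} m^j_{ℓ,t} = 0 for every type t where the group-cardinality constraint is tight. -/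
open Finset

/-- Membership in the polytope `P ⊆ [0,1]^{I×T}`:
`x_{ℓ,t} = 0` whenever `s ℓ > ε·f t`; `∑_ℓ x_{ℓ,t}·s ℓ ≤ f t·|t|` for each type `t`;
`∑_t x_{ℓ,t} = 1` for each item `ℓ`; and `∑_{ℓ∈G_j} x_{ℓ,t} ≤ L t j` for each group `j`
and type `t`. -/
def MemP {I T : Type*} [Fintype I] [Fintype T] {n : ℕ}
    (grp : I → Fin n) (s : I → ℝ) (f : T → ℝ) (sz : T → ℕ)
    (L : T → Fin n → ℕ) (ε : ℝ) (x : I → T → ℝ) : Prop :=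
  (∀ ℓ t, 0 ≤ x ℓ t ∧ x ℓ t ≤ 1) ∧
  (∀ ℓ t, ε * f t < s ℓ → x ℓ t = 0) ∧
  (∀ t, ∑ ℓ, x ℓ t * s ℓ ≤ f t * sz t) ∧
  (∀ ℓ, ∑ t, x ℓ t = 1) ∧
  (∀ (j : Fin n) (t : T),
    ∑ ℓ ∈ univ.filter (fun ℓ => grp ℓ = j), x ℓ t ≤ (L t j : ℝ))

/-- `x` is a vertex (extreme point) of the polytope `P`. -/
def IsVertexP {I T : Type*} [Fintype I] [Fintype T] {n : ℕ}
    (grp : I → Fin n) (s : I → ℝ) (f : T → ℝ) (sz : T → ℕ)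
    (L : T → Fin n → ℕ) (ε : ℝ) (x : I → T → ℝ) : Prop :=
  MemP grp s f sz L ε x ∧
  ∀ y z, MemP grp s f sz L ε y → MemP grp s f sz L ε z →
    (∀ ℓ t, x ℓ t = (y ℓ t + z ℓ t) / 2) → y = z

/-- A sum of values each equal to `0` or `1` equals the number of `1`s. -/
lemma aux_sum_zero_one {α : Type*} [DecidableEq α] (s : Finset α) (g : α → ℝ)
    (h : ∀ a ∈ s, g a = 0 ∨ g a = 1) :
    ∑ a ∈ s, g a = ((s.filter (fun a => g a = 1)).card : ℝ) := by
  rw [← Finset.sum_boole]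
  refine Finset.sum_congr rfl fun a ha => ?_
  rcases h a ha with h0 | h1
  · simp [h0]
  · simp [h1]


noncomputable def extMap {I T : Type*} [DecidableEq I] [DecidableEq T] (A : Finset (I × T)) :
    (↥A → ℝ) →ₗ[ℝ] (I → T → ℝ) where
  toFun y ℓ t := if h : (ℓ, t) ∈ A then y ⟨(ℓ, t), h⟩ else 0
  map_add' y z := by funext ℓ t; by_cases h : (ℓ, t) ∈ A <;> simp [h]
  map_smul' c y := by funext ℓ t; by_cases h : (ℓ, t) ∈ A <;> simp [h]

lemma extMap_apply {I T : Type*} [DecidableEq I] [DecidableEq T] (A : Finset (I × T)) (y : ↥A → ℝ) (ℓ : I) (t : T) :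
    extMap A y ℓ t = if h : (ℓ, t) ∈ A then y ⟨(ℓ, t), h⟩ else 0 := rfl

lemma extMap_coe {I T : Type*} [DecidableEq I] [DecidableEq T] (A : Finset (I × T)) (y : ↥A → ℝ) (e : ↥A) :
    extMap A y e.1.1 e.1.2 = y e := by
  have h : (e.1.1, e.1.2) ∈ A := by rw [Prod.mk.eta]; exact e.2
  rw [extMap_apply, dif_pos h]

lemma extMap_eq_zero {I T : Type*} [DecidableEq I] [DecidableEq T] (A : Finset (I × T)) (y : ↥A → ℝ) (ℓ : I) (t : T)
    (h : (ℓ, t) ∉ A) : extMap A y ℓ t = 0 := by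
  rw [extMap_apply, dif_neg h]

noncomputable def phiMap {I T : Type*} [Fintype I] [Fintype T] [DecidableEq I] [DecidableEq T]
    (A : Finset (I × T)) (G : Finset I) (Items : Finset I) (TT : Finset T) :
    (↥A → ℝ) →ₗ[ℝ] ((↥Items → ℝ) × (↥TT → ℝ)) where
  toFun y := (fun ℓ => ∑ t, extMap A y ℓ.1 t, fun t => ∑ ℓ ∈ G, extMap A y ℓ t.1)
  map_add' y z := by
    refine Prod.ext ?_ ?_ <;> funext w <;>
      simp [map_add, Finset.sum_add_distrib]
  map_smul' c y := by
    refine Prod.ext ?_ ?_ <;> funext w <;>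
      simp [Finset.mul_sum]

lemma phiMap_fst {I T : Type*} [Fintype I] [Fintype T] [DecidableEq I] [DecidableEq T]
    (A : Finset (I × T)) (G : Finset I) (Items : Finset I) (TT : Finset T)
    (y : ↥A → ℝ) (w : ↥Items) :
    (phiMap A G Items TT y).1 w = ∑ t, extMap A y w.1 t := rfl

lemma phiMap_snd {I T : Type*} [Fintype I] [Fintype T] [DecidableEq I] [DecidableEq T]
    (A : Finset (I × T)) (G : Finset I) (Items : Finset I) (TT : Finset T)
    (y : ↥A → ℝ) (w : ↥TT) :
    (phiMap A G Items TT y).2 w = ∑ ℓ ∈ G, extMap A y ℓ w.1 := rfl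

noncomputable def sumDiff (β γ : Type*) [Fintype β] [Fintype γ] :
    ((β → ℝ) × (γ → ℝ)) →ₗ[ℝ] ℝ where
  toFun w := ∑ b, w.1 b - ∑ c, w.2 c
  map_add' u v := by simp [Finset.sum_add_distrib]; try ring
  map_smul' c u := by
    simp only [Prod.smul_fst, Prod.smul_snd, Pi.smul_apply, smul_eq_mul, RingHom.id_apply]
    rw [mul_sub, Finset.mul_sum, Finset.mul_sum]

lemma sumDiff_apply (β γ : Type*) [Fintype β] [Fintype γ] (w : (β → ℝ) × (γ → ℝ)) :
    sumDiff β γ w = ∑ b, w.1 b - ∑ c, w.2 c := rfl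

/-- Movement lemma: if `x` is a vertex of `P` and group `G_j` is fractional, then there is
a nonzero movement vector `m` supported only on coordinates `(ℓ,t)` with `ℓ ∈ G_j` and
`x_{ℓ,t} ∈ (0,1)`, whose rows sum to zero, and whose group sums vanish at every type where
the group-cardinality constraint is tight. -/
theorem stmt_7 {I T : Type*} [Fintype I] [Fintype T] {n : ℕ}
    (grp : I → Fin n) (s : I → ℝ) (f : T → ℝ) (sz : T → ℕ)
    (L : T → Fin n → ℕ) (ε : ℝ)
    (hs : ∀ ℓ, 0 < s ℓ ∧ s ℓ ≤ 1) (hf : ∀ t, 0 < f t) (hε : 0 < ε ∧ ε < 1)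
    (x : I → T → ℝ) (hx : IsVertexP grp s f sz L ε x)
    (j : Fin n) (hfrac : ∃ ℓ t, grp ℓ = j ∧ 0 < x ℓ t ∧ x ℓ t < 1) :
    ∃ m : I → T → ℝ, m ≠ 0 ∧
      (∀ ℓ t, m ℓ t ≠ 0 → grp ℓ = j ∧ 0 < x ℓ t ∧ x ℓ t < 1) ∧
      (∀ ℓ, ∑ t, m ℓ t = 0) ∧
      (∀ t, (∑ ℓ ∈ univ.filter (fun ℓ => grp ℓ = j), x ℓ t = (L t j : ℝ)) →
            ∑ ℓ ∈ univ.filter (fun ℓ => grp ℓ = j), m ℓ t = 0) := by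
  classical
  obtain ⟨⟨hbnd, -, -, hrow, -⟩, -⟩ := hx
  obtain ⟨ℓ₀, t₀, hg₀, h0₀, h1₀⟩ := hfrac
  set G : Finset I := univ.filter (fun ℓ => grp ℓ = j) with hGdef
  set A : Finset (I × T) :=
    univ.filter (fun e => grp e.1 = j ∧ 0 < x e.1 e.2 ∧ x e.1 e.2 < 1) with hAdef
  have hmemA : ∀ e : I × T, e ∈ A ↔ (grp e.1 = j ∧ 0 < x e.1 e.2 ∧ x e.1 e.2 < 1) := by
    intro e; simp [hAdef]
  set Items : Finset I := A.image Prod.fst with hItemsdef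
  set TT : Finset T := (A.image Prod.snd).filter
      (fun t => ∑ ℓ ∈ G, x ℓ t = (L t j : ℝ)) with hTTdef
  have hA₀ : (ℓ₀, t₀) ∈ A := (hmemA _).2 ⟨hg₀, h0₀, h1₀⟩
  have hItems₀ : ℓ₀ ∈ Items := mem_image.2 ⟨_, hA₀, rfl⟩
  have hItemsG : ∀ ℓ ∈ Items, grp ℓ = j := by
    intro ℓ hℓ
    obtain ⟨e, heA, he1⟩ := mem_image.1 hℓ
    rw [← he1]; exact ((hmemA e).1 heA).1
  -- non-fractional entries of group j items are 0 or 1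
  have h01 : ∀ ℓ t, grp ℓ = j → (ℓ, t) ∉ A → x ℓ t = 0 ∨ x ℓ t = 1 := by
    intro ℓ t hgj hnot
    rcases hbnd ℓ t with ⟨hb0, hb1⟩
    by_contra hcon
    push_neg at hcon
    exact hnot ((hmemA _).2
      ⟨hgj, lt_of_le_of_ne hb0 (Ne.symm hcon.1), lt_of_le_of_ne hb1 hcon.2⟩)
  -- each fractional item has at least two fractional entries
  have hdegI : ∀ ℓ ∈ Items, 2 ≤ (A.filter (fun e => e.1 = ℓ)).card := by
    intro ℓ hℓ
    obtain ⟨e, heA, he1⟩ := mem_image.1 hℓ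
    have ht1 : (ℓ, e.2) ∈ A := by rw [← he1, Prod.mk.eta]; exact heA
    set t1 := e.2 with ht1def
    rcases (hmemA _).1 ht1 with ⟨hgj, hx0, hx1⟩
    by_contra hlt
    push_neg at hlt
    have huniq : ∀ a ∈ A.filter (fun e => e.1 = ℓ), ∀ b ∈ A.filter (fun e => e.1 = ℓ), a = b := by
      intro a ha b hb
      by_contra hne
      exact absurd (Finset.one_lt_card.2 ⟨a, ha, b, hb, hne⟩) (by omega)
    have key : ∀ t, (ℓ, t) ∈ A → t = t1 := by
      intro t ht
      have := huniq _ (mem_filter.2 ⟨ht, rfl⟩) _ (mem_filter.2 ⟨ht1, rfl⟩)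
      exact congrArg Prod.snd this
    have hr := hrow ℓ
    rw [← Finset.sum_erase_add _ _ (mem_univ t1)] at hr
    have hsum : ∑ t ∈ univ.erase t1, x ℓ t =
        (((univ.erase t1).filter (fun t => x ℓ t = 1)).card : ℝ) := by
      apply aux_sum_zero_one
      intro t ht
      have htne : t ≠ t1 := (Finset.mem_erase.1 ht).1
      exact h01 ℓ t hgj (fun hA' => htne (key t hA'))
    rw [hsum] at hr
    set k := ((univ.erase t1).filter (fun t => x ℓ t = 1)).card with hkdef
    rcases Nat.eq_zero_or_pos k with hk | hk
    · rw [hk] at hr; simp at hr; linarith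
    · have h1k : (1 : ℝ) ≤ (k : ℝ) := by exact_mod_cast hk
      linarith
  -- each tight type has at least two fractional entries in group j
  have hdegT : ∀ t ∈ TT, 2 ≤ (A.filter (fun e => e.2 = t)).card := by
    intro t ht
    obtain ⟨htim, htight⟩ := mem_filter.1 ht
    obtain ⟨e, heA, he2⟩ := mem_image.1 htim
    have hℓ1 : (e.1, t) ∈ A := by rw [← he2, Prod.mk.eta]; exact heA
    set ℓ1 := e.1 with hℓ1def
    rcases (hmemA _).1 hℓ1 with ⟨hgj, hx0, hx1⟩
    by_contra hlt
    push_neg at hlt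
    have huniq : ∀ a ∈ A.filter (fun e => e.2 = t), ∀ b ∈ A.filter (fun e => e.2 = t), a = b := by
      intro a ha b hb
      by_contra hne
      exact absurd (Finset.one_lt_card.2 ⟨a, ha, b, hb, hne⟩) (by omega)
    have key : ∀ ℓ, (ℓ, t) ∈ A → ℓ = ℓ1 := by
      intro ℓ hℓ
      have := huniq _ (mem_filter.2 ⟨hℓ, rfl⟩) _ (mem_filter.2 ⟨hℓ1, rfl⟩)
      exact congrArg Prod.fst this
    have hℓ1G : ℓ1 ∈ G := by rw [hGdef]; exact mem_filter.2 ⟨mem_univ _, hgj⟩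
    rw [← Finset.sum_erase_add _ _ hℓ1G] at htight
    have hsum : ∑ ℓ ∈ G.erase ℓ1, x ℓ t =
        (((G.erase ℓ1).filter (fun ℓ => x ℓ t = 1)).card : ℝ) := by
      apply aux_sum_zero_one
      intro ℓ hℓ
      have hℓne : ℓ ≠ ℓ1 := (Finset.mem_erase.1 hℓ).1
      have hℓj : grp ℓ = j := by
        have := (Finset.mem_erase.1 hℓ).2
        rw [hGdef] at this; exact (mem_filter.1 this).2
      exact h01 ℓ t hℓj (fun hA' => hℓne (key ℓ hA'))
    rw [hsum] at htight
    set k := ((G.erase ℓ1).filter (fun ℓ => x ℓ t = 1)).card with hkdef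
    -- (k:ℝ) + x ℓ1 t = L t j, 0 < x ℓ1 t < 1
    have hkL : (k : ℝ) < (L t j : ℝ) := by linarith
    have hLk : (L t j : ℝ) < (k : ℝ) + 1 := by linarith
    have h1 : k < L t j := by exact_mod_cast hkL
    have h2 : L t j < k + 1 := by exact_mod_cast hLk
    omega
  -- counting
  have hfib1 : A.card = ∑ ℓ ∈ Items, (A.filter (fun e => e.1 = ℓ)).card :=
    Finset.card_eq_sum_card_fiberwise (fun e he => mem_image.2 ⟨e, he, rfl⟩)
  have hc1 : 2 * Items.card ≤ A.card := by
    rw [hfib1]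
    calc 2 * Items.card = ∑ _ℓ ∈ Items, 2 := by
          rw [Finset.sum_const, smul_eq_mul, mul_comm]
      _ ≤ _ := Finset.sum_le_sum hdegI
  set B : Finset (I × T) := A.filter (fun e => e.2 ∈ TT) with hBdef
  have hBsub : B ⊆ A := Finset.filter_subset _ _
  have hfib2 : B.card = ∑ t ∈ TT, (B.filter (fun e => e.2 = t)).card :=
    Finset.card_eq_sum_card_fiberwise (fun e he => (mem_filter.1 he).2)
  have hc2 : 2 * TT.card ≤ B.card := by
    rw [hfib2]
    calc 2 * TT.card = ∑ _t ∈ TT, 2 := by rw [Finset.sum_const, smul_eq_mul, mul_comm]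
      _ ≤ _ := by
          refine Finset.sum_le_sum fun t ht => ?_
          have : B.filter (fun e => e.2 = t) = A.filter (fun e => e.2 = t) := by
            ext e
            simp only [hBdef, Finset.mem_filter, and_assoc]
            constructor
            · rintro ⟨h1, h2, h3⟩; exact ⟨h1, h3⟩
            · rintro ⟨h1, h3⟩; exact ⟨h1, h3 ▸ ht, h3⟩
          rw [this]
          exact hdegT t ht
  -- linear algebra setup
  set Φ := phiMap A G Items TT with hΦdef
  have hdimV : Module.finrank ℝ (↥A → ℝ) = A.card := by
    rw [Module.finrank_fintype_fun_eq_card, Fintype.card_coe]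
  have hdimW : Module.finrank ℝ ((↥Items → ℝ) × (↥TT → ℝ)) = Items.card + TT.card := by
    rw [Module.finrank_prod, Module.finrank_fintype_fun_eq_card,
      Module.finrank_fintype_fun_eq_card, Fintype.card_coe, Fintype.card_coe]
  -- sums over everything
  have hAsubP : A ⊆ Items ×ˢ (univ : Finset T) := by
    intro e he
    exact Finset.mem_product.2 ⟨mem_image.2 ⟨e, he, rfl⟩, mem_univ _⟩
  have claim1 : ∀ y : ↥A → ℝ,
      ∑ w : ↥Items, (Φ y).1 w = ∑ e ∈ A, extMap A y e.1 e.2 := by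
    intro y
    have h1 : ∑ w : ↥Items, (Φ y).1 w = ∑ ℓ ∈ Items, ∑ t, extMap A y ℓ t := by
      rw [← Finset.sum_coe_sort Items (fun ℓ => ∑ t, extMap A y ℓ t)]
      rfl
    rw [h1, ← Finset.sum_product']
    exact (Finset.sum_subset hAsubP (fun e _ he => extMap_eq_zero A y e.1 e.2 he)).symm
  have claim2 : ∀ y : ↥A → ℝ,
      ∑ w : ↥TT, (Φ y).2 w = ∑ e ∈ B, extMap A y e.1 e.2 := by
    intro y
    have h1 : ∑ w : ↥TT, (Φ y).2 w = ∑ t ∈ TT, ∑ ℓ ∈ G, extMap A y ℓ t := by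
      rw [← Finset.sum_coe_sort TT (fun t => ∑ ℓ ∈ G, extMap A y ℓ t)]
      rfl
    rw [h1, Finset.sum_comm, ← Finset.sum_product']
    refine (Finset.sum_subset ?_ ?_).symm
    · intro e he
      have heA := hBsub he
      refine Finset.mem_product.2 ⟨?_, (mem_filter.1 he).2⟩
      rw [hGdef]
      exact mem_filter.2 ⟨mem_univ _, ((hmemA e).1 heA).1⟩
    · intro e heGT heB
      by_contra hne
      have heA : e ∈ A := by
        by_contra h
        exact hne (extMap_eq_zero A y e.1 e.2 (by rwa [Prod.mk.eta]))
      exact heB (mem_filter.2 ⟨heA, (Finset.mem_product.1 heGT).2⟩)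
  -- rank bound
  have hrange : Module.finrank ℝ (LinearMap.range Φ) < A.card := by
    by_cases hBA : B = A
    · -- all fractional entries are at tight types
      have hcard : Items.card + TT.card ≤ A.card := by
        have hBAcard : B.card = A.card := by rw [hBA]
        omega
      have hpos : 1 ≤ Items.card := Finset.card_pos.2 ⟨ℓ₀, hItems₀⟩
      -- the functional kills the range
      have hle : LinearMap.range Φ ≤ LinearMap.ker (sumDiff ↥Items ↥TT) := by
        rintro w ⟨y, rfl⟩
        rw [LinearMap.mem_ker, sumDiff_apply, claim1 y, claim2 y, hBA, sub_self]
      -- the functional is surjective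
      have hsurj : Function.Surjective (sumDiff ↥Items ↥TT) := by
        intro c
        refine ⟨(Pi.single (⟨ℓ₀, hItems₀⟩ : ↥Items) c, 0), ?_⟩
        rw [sumDiff_apply]
        simp
      have hkerdim : Module.finrank ℝ (LinearMap.ker (sumDiff ↥Items ↥TT))
          = Items.card + TT.card - 1 := by
        have h := LinearMap.finrank_range_add_finrank_ker (sumDiff ↥Items ↥TT)
        rw [hdimW] at h
        have hr : Module.finrank ℝ (LinearMap.range (sumDiff ↥Items ↥TT)) = 1 := by
          rw [LinearMap.range_eq_top.2 hsurj, finrank_top, Module.finrank_self]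
        omega
      have := Submodule.finrank_mono hle
      rw [hkerdim] at this
      omega
    · have hBA' : B ⊂ A := ssubset_of_subset_of_ne hBsub hBA
      have hlt : B.card < A.card := Finset.card_lt_card hBA'
      have hrk : Module.finrank ℝ (LinearMap.range Φ) ≤ Items.card + TT.card := by
        rw [← hdimW]
        exact Submodule.finrank_le _
      omega
  -- nontrivial kernel
  have hrn := LinearMap.finrank_range_add_finrank_ker Φ
  rw [hdimV] at hrn
  have hne : LinearMap.ker Φ ≠ ⊥ := by
    intro h
    rw [h, finrank_bot] at hrn
    omega
  obtain ⟨y, hyker, hy0⟩ := Submodule.exists_mem_ne_zero_of_ne_bot hne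
  have hΦy : Φ y = 0 := LinearMap.mem_ker.1 hyker
  -- the movement vector
  refine ⟨extMap A y, ?_, ?_, ?_, ?_⟩
  · intro hm
    apply hy0
    funext e
    have := congrFun (congrFun hm e.1.1) e.1.2
    rw [extMap_coe] at this
    simpa using this
  · intro ℓ t hmne
    have hin : (ℓ, t) ∈ A := by
      by_contra hn
      exact hmne (extMap_eq_zero A y ℓ t hn)
    exact (hmemA _).1 hin
  · intro ℓ
    by_cases hℓ : ℓ ∈ Items
    · have h3 := congrFun (congrArg Prod.fst hΦy) ⟨ℓ, hℓ⟩
      rw [phiMap_fst] at h3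
      simpa using h3
    · apply Finset.sum_eq_zero
      intro t _
      by_contra hne
      have hin : (ℓ, t) ∈ A := by
        by_contra hn
        exact hne (extMap_eq_zero A y ℓ t hn)
      exact hℓ (mem_image.2 ⟨(ℓ, t), hin, rfl⟩)
  · intro t htight
    by_cases hTTm : t ∈ TT
    · have h4 := congrFun (congrArg Prod.snd hΦy) ⟨t, hTTm⟩
      rw [phiMap_snd] at h4
      simpa using h4
    · apply Finset.sum_eq_zero
      intro ℓ _
      by_contra hne
      have hin : (ℓ, t) ∈ A := by
        by_contra hn
        exact hne (extMap_eq_zero A y ℓ t hn)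
      exact hTTm (mem_filter.2 ⟨mem_image.2 ⟨(ℓ, t), hin, rfl⟩, htight⟩)
end

section
/- Let x be a vertex of the polytope P as above. Then the number of groups G_j that are fractional (i.e., containing some item ℓ with x_{ℓ,t} ∈ (0,1) for some t) is at most |T|. -/
open Finset

lemma sum01 {α : Type*} [DecidableEq α] (F : Finset α) (v : α → ℝ)
    (h : ∀ a ∈ F, v a = 0 ∨ v a = 1) : ∃ k : ℕ, ∑ a ∈ F, v a = k := by
  induction F using Finset.induction_on with
  | empty => exact ⟨0, by simp⟩
  | insert _ _ ha ih =>
    obtain ⟨k, hk⟩ := ih (fun a haF => h a (Finset.mem_insert_of_mem haF))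
    rcases h _ (Finset.mem_insert_self _ _) with h0 | h1
    · exact ⟨k, by rw [Finset.sum_insert ha, h0, hk]; ring⟩
    · exact ⟨k + 1, by rw [Finset.sum_insert ha, h1, hk]; push_cast; ring⟩

lemma exists_second_frac {α : Type*} [DecidableEq α] (F : Finset α) (v : α → ℝ)
    (hb : ∀ a ∈ F, 0 ≤ v a ∧ v a ≤ 1) (c : ℕ) (hsum : ∑ a ∈ F, v a = c)
    (a0 : α) (ha0 : a0 ∈ F) (hf0 : 0 < v a0) (hf1 : v a0 < 1) :
    ∃ a1 ∈ F, a1 ≠ a0 ∧ 0 < v a1 ∧ v a1 < 1 := by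
  by_contra hcon
  push_neg at hcon
  have h01 : ∀ a ∈ F.erase a0, v a = 0 ∨ v a = 1 := by
    intro a ha
    have haF := Finset.mem_of_mem_erase ha
    have hane := Finset.ne_of_mem_erase ha
    rcases (hb a haF).1.eq_or_lt with h | h
    · exact Or.inl h.symm
    · rcases (hb a haF).2.lt_or_eq with h' | h'
      · linarith [hcon a haF hane h]
      · exact Or.inr h'
  obtain ⟨k, hk⟩ := sum01 (F.erase a0) v h01
  have hsplit : v a0 + ∑ a ∈ F.erase a0, v a = ∑ a ∈ F, v a :=
    Finset.add_sum_erase F v ha0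
  have hva : v a0 = (c : ℝ) - k := by rw [hk] at hsplit; linarith [hsum ▸ hsplit]
  have h1 : (k : ℝ) < c := by linarith
  have h2 : (c : ℝ) < k + 1 := by linarith
  have h1' : k < c := by exact_mod_cast h1
  have h2' : c < k + 1 := by exact_mod_cast h2
  omega


lemma exists_kernel_vec {I T : Type*} [Fintype I] [Fintype T] [DecidableEq I] [DecidableEq T]
    (E : Finset (I × T)) (R : Finset I) (C : Finset T)
    (hRE : ∀ p ∈ E, p.1 ∈ R)
    (hrowdeg : ∀ ℓ ∈ R, 2 ≤ (E.filter (fun p => p.1 = ℓ)).card)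
    (hcoldeg : ∀ t ∈ C, 2 ≤ (E.filter (fun p => p.2 = t)).card)
    (hRne : R.Nonempty) :
    ∃ m : I → T → ℝ, (∃ p : I × T, m p.1 p.2 ≠ 0) ∧
      (∀ p : I × T, m p.1 p.2 ≠ 0 → p ∈ E) ∧
      (∀ ℓ, ∑ t, m ℓ t = 0) ∧ (∀ t ∈ C, ∑ ℓ, m ℓ t = 0) := by
  classical
  -- cardinality facts
  have hR2 : 2 * R.card ≤ E.card := by
    rw [Finset.card_eq_sum_card_fiberwise hRE]
    calc 2 * R.card = ∑ _ℓ ∈ R, 2 := by rw [Finset.sum_const, smul_eq_mul, mul_comm]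
      _ ≤ _ := Finset.sum_le_sum hrowdeg
  set Et : Finset (I × T) := E.filter (fun p => p.2 ∈ C) with hEtdef
  have hC2 : 2 * C.card ≤ Et.card := by
    have h1 : Et.card = ∑ t ∈ C, (Et.filter (fun p => p.2 = t)).card :=
      Finset.card_eq_sum_card_fiberwise (fun p hp => (Finset.mem_filter.1 hp).2)
    have h2 : ∀ t ∈ C, Et.filter (fun p => p.2 = t) = E.filter (fun p => p.2 = t) := by
      intro t ht
      ext p
      simp only [hEtdef, Finset.mem_filter, and_assoc]
      constructor
      · rintro ⟨h1, h2, h3⟩; exact ⟨h1, h3⟩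
      · rintro ⟨h1, h3⟩; exact ⟨h1, h3 ▸ ht, h3⟩
    rw [h1, Finset.sum_congr rfl (fun t ht => by rw [h2 t ht])]
    calc 2 * C.card = ∑ _t ∈ C, 2 := by rw [Finset.sum_const, smul_eq_mul, mul_comm]
      _ ≤ _ := Finset.sum_le_sum hcoldeg
  have hEtE : Et.card ≤ E.card := Finset.card_le_card (Finset.filter_subset _ _)
  -- the linear map
  set Φ : (↥E → ℝ) →ₗ[ℝ] ((↥R ⊕ ↥C) → ℝ) :=
    { toFun := fun v => Sum.elim
        (fun r => ∑ e : ↥E, v e * (if (e : I × T).1 = ↑r then 1 else 0))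
        (fun c => ∑ e : ↥E, v e * (if (e : I × T).2 = ↑c then 1 else 0)),
      map_add' := by
        intro a b; funext w
        cases w <;>
          simp only [Sum.elim_inl, Sum.elim_inr, Pi.add_apply, add_mul,
            Finset.sum_add_distrib]
      map_smul' := by
        intro r a; funext w
        cases w <;>
          simp only [Sum.elim_inl, Sum.elim_inr, Pi.smul_apply, smul_eq_mul,
            RingHom.id_apply, Finset.mul_sum, mul_assoc] } with hΦdef
  have hnotinj : ¬ Function.Injective Φ := by
    intro hinj
    have hle := LinearMap.finrank_le_finrank_of_injective hinj
    have hdom : Module.finrank ℝ (↥E → ℝ) = E.card := by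
      rw [Module.finrank_fintype_fun_eq_card, Fintype.card_coe]
    have hcod : Module.finrank ℝ ((↥R ⊕ ↥C) → ℝ) = R.card + C.card := by
      rw [Module.finrank_fintype_fun_eq_card, Fintype.card_sum, Fintype.card_coe,
        Fintype.card_coe]
    rw [hdom, hcod] at hle
    by_cases hEt : Et = E
    · -- all columns of E lie in C : image of Φ lies in a hyperplane
      have heC : ∀ e : ↥E, (e : I × T).2 ∈ C := by
        intro e
        have : (e : I × T) ∈ Et := by rw [hEt]; exact e.2
        exact (Finset.mem_filter.1 this).2
      set ψ : ((↥R ⊕ ↥C) → ℝ) →ₗ[ℝ] ℝ :=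
        { toFun := fun y => (∑ u : ↥R, y (Sum.inl u)) - ∑ w : ↥C, y (Sum.inr w),
          map_add' := by
            intro a b
            simp only [Pi.add_apply, Finset.sum_add_distrib]
            exact add_sub_add_comm _ _ _ _
          map_smul' := by
            intro r a
            simp only [Pi.smul_apply, smul_eq_mul, RingHom.id_apply]
            rw [mul_sub, Finset.mul_sum, Finset.mul_sum] } with hψdef
      have hψΦ : ∀ v, ψ (Φ v) = 0 := by
        intro v
        have h1 : ∑ r : ↥R, (Φ v) (Sum.inl r) = ∑ e : ↥E, v e := by
          show ∑ r : ↥R, ∑ e : ↥E, v e * (if (e : I × T).1 = ↑r then 1 else 0) = _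
          rw [Finset.sum_comm]
          refine Finset.sum_congr rfl fun e _ => ?_
          rw [← Finset.mul_sum]
          have : ∑ r : ↥R, (if (e : I × T).1 = ↑r then (1:ℝ) else 0) = 1 := by
            rw [Finset.sum_coe_sort R (fun r => if (e : I × T).1 = r then (1:ℝ) else 0),
              Finset.sum_ite_eq]
            simp [hRE _ e.2]
          rw [this, mul_one]
        have h2 : ∑ c : ↥C, (Φ v) (Sum.inr c) = ∑ e : ↥E, v e := by
          show ∑ c : ↥C, ∑ e : ↥E, v e * (if (e : I × T).2 = ↑c then 1 else 0) = _
          rw [Finset.sum_comm]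
          refine Finset.sum_congr rfl fun e _ => ?_
          rw [← Finset.mul_sum]
          have : ∑ c : ↥C, (if (e : I × T).2 = ↑c then (1:ℝ) else 0) = 1 := by
            rw [Finset.sum_coe_sort C (fun c => if (e : I × T).2 = c then (1:ℝ) else 0),
              Finset.sum_ite_eq]
            simp [heC e]
          rw [this, mul_one]
        show (∑ r : ↥R, (Φ v) (Sum.inl r)) - ∑ c : ↥C, (Φ v) (Sum.inr c) = 0
        rw [h1, h2, sub_self]
      have hψne : ψ ≠ 0 := by
        intro h0
        have h1 : ψ (Sum.elim (fun _ => (1:ℝ)) (fun _ => 0)) = R.card := by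
          show (∑ _r : ↥R, (1:ℝ)) - ∑ _c : ↥C, (0:ℝ) = R.card
          simp [Fintype.card_coe]
        rw [h0] at h1
        simp only [LinearMap.zero_apply] at h1
        exact absurd h1.symm (by exact_mod_cast hRne.card_pos.ne')
      -- restrict Φ to the kernel of ψ
      have hinj' : Function.Injective (Φ.codRestrict (LinearMap.ker ψ) hψΦ) := by
        intro a b hab
        exact hinj (by
          funext w
          have := congrArg Subtype.val hab
          exact congrFun this w)
      have hle' := LinearMap.finrank_le_finrank_of_injective hinj'
      have hkerrange := LinearMap.finrank_range_add_finrank_ker ψ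
      have hrangepos : 0 < Module.finrank ℝ (LinearMap.range ψ) := by
        rcases Nat.eq_zero_or_pos (Module.finrank ℝ (LinearMap.range ψ)) with h | h
        · rw [Submodule.finrank_eq_zero] at h
          exact absurd (LinearMap.range_eq_bot.1 h) hψne
        · exact h
      rw [hcod] at hkerrange
      rw [hdom] at hle'
      have hEtcard : Et.card = E.card := by rw [hEt]
      have hRpos : 0 < R.card := hRne.card_pos
      omega
    · -- some edge avoids C : plain dimension count
      have hEtlt : Et.card < E.card :=
        Finset.card_lt_card (Finset.ssubset_iff_subset_ne.2 ⟨Finset.filter_subset _ _, hEt⟩)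
      omega
  obtain ⟨v, hvmem, hvne⟩ := Submodule.exists_mem_ne_zero_of_ne_bot
    (fun h => hnotinj (LinearMap.ker_eq_bot.1 h))
  have hv0 : Φ v = 0 := hvmem
  -- build m
  set m : I → T → ℝ := fun ℓ t => if h : (ℓ, t) ∈ E then v ⟨(ℓ, t), h⟩ else 0 with hmdef
  have hmE : ∀ (p : I × T) (h : p ∈ E), m p.1 p.2 = v ⟨p, h⟩ := fun p h => dif_pos h
  have hm0 : ∀ p : I × T, p ∉ E → m p.1 p.2 = 0 := fun p h => dif_neg h
  have hsupp : ∀ p : I × T, m p.1 p.2 ≠ 0 → p ∈ E := by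
    intro p hp
    by_contra h
    exact hp (hm0 p h)
  have hbridge : ∀ g : I × T → ℝ,
      ∑ e : ↥E, v e * g ↑e = ∑ p : I × T, m p.1 p.2 * g p := by
    intro g
    calc ∑ e : ↥E, v e * g ↑e = ∑ e : ↥E, m (↑e : I × T).1 (↑e : I × T).2 * g ↑e :=
          Finset.sum_congr rfl fun e _ => by rw [hmE _ e.2]
      _ = ∑ p ∈ E, m p.1 p.2 * g p := Finset.sum_coe_sort E (fun p => m p.1 p.2 * g p)
      _ = ∑ p : I × T, m p.1 p.2 * g p :=
          Finset.sum_subset (Finset.subset_univ E)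
            (fun p _ hp => by rw [hm0 p hp, zero_mul])
  refine ⟨m, ?_, hsupp, ?_, ?_⟩
  · obtain ⟨e, he⟩ := Function.ne_iff.1 hvne
    exact ⟨↑e, by rw [hmE _ e.2]; simpa using he⟩
  · -- row sums
    intro ℓ
    by_cases hℓR : ℓ ∈ R
    · have h0 : (Φ v) (Sum.inl ⟨ℓ, hℓR⟩) = 0 := by rw [hv0]; rfl
      have h1 : (Φ v) (Sum.inl ⟨ℓ, hℓR⟩)
          = ∑ p : I × T, m p.1 p.2 * (if p.1 = ℓ then 1 else 0) := by
        show ∑ e : ↥E, v e * (if (e : I × T).1 = ℓ then 1 else 0) = _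
        exact hbridge (fun p => if p.1 = ℓ then 1 else 0)
      have h2 : ∑ p : I × T, m p.1 p.2 * (if p.1 = ℓ then 1 else 0) = ∑ t, m ℓ t := by
        rw [Fintype.sum_prod_type]
        have h3 : ∀ i : I, ∑ t, m i t * (if i = ℓ then (1:ℝ) else 0)
            = if i = ℓ then ∑ t, m i t else 0 := by
          intro i; split <;> simp
        rw [Finset.sum_congr rfl (fun i _ => h3 i), Finset.sum_ite_eq' univ ℓ]
        simp
      rw [← h2, ← h1, h0]
    · refine Finset.sum_eq_zero fun t _ => ?_
      by_contra h
      exact hℓR (hRE _ (hsupp (ℓ, t) h))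
  · -- column sums for t ∈ C
    intro t htC
    have h0 : (Φ v) (Sum.inr ⟨t, htC⟩) = 0 := by rw [hv0]; rfl
    have h1 : (Φ v) (Sum.inr ⟨t, htC⟩)
        = ∑ p : I × T, m p.1 p.2 * (if p.2 = t then 1 else 0) := by
      show ∑ e : ↥E, v e * (if (e : I × T).2 = t then 1 else 0) = _
      exact hbridge (fun p => if p.2 = t then 1 else 0)
    have h2 : ∑ p : I × T, m p.1 p.2 * (if p.2 = t then 1 else 0) = ∑ ℓ, m ℓ t := by
      rw [Fintype.sum_prod_type]
      refine Finset.sum_congr rfl fun i _ => ?_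
      have h3 : ∀ t' : T, m i t' * (if t' = t then (1:ℝ) else 0)
          = if t' = t then m i t' else 0 := by
        intro t'; split <;> simp
      rw [Finset.sum_congr rfl (fun t' _ => h3 t'), Finset.sum_ite_eq' univ t]
      simp
    rw [← h2, ← h1, h0]

lemma movement {I T : Type*} [Fintype I] [Fintype T] {n : ℕ}
    (grp : I → Fin n) (s : I → ℝ) (f : T → ℝ) (sz : T → ℕ)
    (L : T → Fin n → ℕ) (ε : ℝ) (x : I → T → ℝ)
    (hx : MemP grp s f sz L ε x) (j : Fin n)
    (hj : ∃ ℓ t, grp ℓ = j ∧ 0 < x ℓ t ∧ x ℓ t < 1) :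
    ∃ m : I → T → ℝ,
      (∃ p : I × T, m p.1 p.2 ≠ 0) ∧
      (∀ ℓ t, m ℓ t ≠ 0 → grp ℓ = j ∧ 0 < x ℓ t ∧ x ℓ t < 1) ∧
      (∀ ℓ, ∑ t, m ℓ t = 0) ∧
      (∀ t, ∑ ℓ ∈ univ.filter (fun ℓ => grp ℓ = j), x ℓ t = (L t j : ℝ) →
        ∑ ℓ ∈ univ.filter (fun ℓ => grp ℓ = j), m ℓ t = 0) := by
  classical
  obtain ⟨hb, hz, hk, hrow, hgrp⟩ := hx
  set E : Finset (I × T) :=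
    univ.filter (fun p => grp p.1 = j ∧ 0 < x p.1 p.2 ∧ x p.1 p.2 < 1) with hE
  set R : Finset I := E.image Prod.fst with hR
  set C : Finset T :=
    univ.filter (fun t =>
      (∑ ℓ ∈ univ.filter (fun ℓ => grp ℓ = j), x ℓ t) = (L t j : ℝ) ∧
      ∃ ℓ, (ℓ, t) ∈ E) with hC
  -- membership characterizations
  have hmemE : ∀ p : I × T, p ∈ E ↔ grp p.1 = j ∧ 0 < x p.1 p.2 ∧ x p.1 p.2 < 1 := by
    intro p; simp [hE]
  have hmemR : ∀ ℓ, ℓ ∈ R ↔ ∃ t, (ℓ, t) ∈ E := by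
    intro ℓ
    simp only [hR, Finset.mem_image]
    constructor
    · rintro ⟨p, hp, rfl⟩; exact ⟨p.2, hp⟩
    · rintro ⟨t, ht⟩; exact ⟨(ℓ, t), ht, rfl⟩
  -- E is nonempty
  obtain ⟨ℓ0, t0, hg0, hx0, hx1⟩ := hj
  have hEne : ((ℓ0, t0) : I × T) ∈ E := (hmemE _).2 ⟨hg0, hx0, hx1⟩
  have hRne : R.Nonempty := ⟨ℓ0, (hmemR _).2 ⟨t0, hEne⟩⟩
  -- row degrees ≥ 2
  have hrowdeg : ∀ ℓ ∈ R, 2 ≤ (E.filter (fun p => p.1 = ℓ)).card := by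
    intro ℓ hℓ
    obtain ⟨t1, ht1⟩ := (hmemR ℓ).1 hℓ
    obtain ⟨hgj, hf0, hf1⟩ := (hmemE _).1 ht1
    obtain ⟨t2, -, ht2ne, hg0', hg1'⟩ :=
      exists_second_frac (univ : Finset T) (x ℓ) (fun t _ => hb ℓ t) 1
        (by simpa using hrow ℓ) t1 (Finset.mem_univ _) hf0 hf1
    have hsub : ({(ℓ, t1), (ℓ, t2)} : Finset (I × T)) ⊆ E.filter (fun p => p.1 = ℓ) := by
      intro p hp
      simp only [Finset.mem_insert, Finset.mem_singleton] at hp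
      rcases hp with rfl | rfl
      · exact Finset.mem_filter.2 ⟨ht1, rfl⟩
      · exact Finset.mem_filter.2 ⟨(hmemE _).2 ⟨hgj, hg0', hg1'⟩, rfl⟩
    calc 2 = ({(ℓ, t1), (ℓ, t2)} : Finset (I × T)).card := by
            rw [Finset.card_pair (by simp [Prod.ext_iff]; exact ht2ne.symm)]
      _ ≤ _ := Finset.card_le_card hsub
  
  have hcoldeg : ∀ t ∈ C, 2 ≤ (E.filter (fun p => p.2 = t)).card := by
    intro t ht
    obtain ⟨htight, ℓ1, hℓ1⟩ := (Finset.mem_filter.1 ht).2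
    obtain ⟨hg1, hf0, hf1⟩ := (hmemE _).1 hℓ1
    obtain ⟨ℓ2, hℓ2F, hℓ2ne, h20, h21⟩ :=
      exists_second_frac (univ.filter (fun ℓ => grp ℓ = j)) (fun ℓ => x ℓ t)
        (fun ℓ _ => hb ℓ t) (L t j) htight ℓ1 (by simp [hg1]) hf0 hf1
    have hg2 : grp ℓ2 = j := (Finset.mem_filter.1 hℓ2F).2
    have hsub : ({(ℓ1, t), (ℓ2, t)} : Finset (I × T)) ⊆ E.filter (fun p => p.2 = t) := by
      intro p hp
      simp only [Finset.mem_insert, Finset.mem_singleton] at hp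
      rcases hp with rfl | rfl
      · exact Finset.mem_filter.2 ⟨hℓ1, rfl⟩
      · exact Finset.mem_filter.2 ⟨(hmemE _).2 ⟨hg2, h20, h21⟩, rfl⟩
    calc 2 = ({(ℓ1, t), (ℓ2, t)} : Finset (I × T)).card := by
          rw [Finset.card_pair (by simp [Prod.ext_iff]; exact hℓ2ne.symm)]
      _ ≤ _ := Finset.card_le_card hsub
  have hRE : ∀ p ∈ E, p.1 ∈ R := fun p hp => (hmemR p.1).2 ⟨p.2, by simpa using hp⟩
  obtain ⟨m, hmne, hmsupp, hmrow, hmcol⟩ :=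
    exists_kernel_vec E R C hRE hrowdeg hcoldeg hRne
  refine ⟨m, hmne, ?_, hmrow, ?_⟩
  · intro ℓ t h
    exact (hmemE (ℓ, t)).1 (hmsupp (ℓ, t) h)
  · intro t htight
    by_cases htC : t ∈ C
    · have h0 := hmcol t htC
      have hsub : ∑ ℓ ∈ univ.filter (fun ℓ => grp ℓ = j), m ℓ t = ∑ ℓ, m ℓ t := by
        refine Finset.sum_subset (Finset.filter_subset _ _) fun ℓ _ hℓ => ?_
        by_contra h
        exact hℓ (Finset.mem_filter.2 ⟨Finset.mem_univ _,
          ((hmemE (ℓ, t)).1 (hmsupp (ℓ, t) h)).1⟩)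
      rw [hsub, h0]
    · refine Finset.sum_eq_zero fun ℓ _ => ?_
      by_contra h
      refine htC ?_
      rw [hC]
      simp only [Finset.mem_filter, Finset.mem_univ, true_and]
      exact ⟨htight, ℓ, hmsupp (ℓ, t) h⟩

/-- If `x` is a vertex of the polytope `P`, then the number of fractional groups (groups
containing some item `ℓ` with `x_{ℓ,t} ∈ (0,1)` for some `t`) is at most `|T|`. -/
theorem stmt_8 {I T : Type*} [Fintype I] [Fintype T] {n : ℕ}
    (grp : I → Fin n) (s : I → ℝ) (f : T → ℝ) (sz : T → ℕ)
    (L : T → Fin n → ℕ) (ε : ℝ)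
    (hs : ∀ ℓ, 0 < s ℓ ∧ s ℓ ≤ 1) (hf : ∀ t, 0 < f t) (hε : 0 < ε ∧ ε < 1)
    (x : I → T → ℝ) (hx : IsVertexP grp s f sz L ε x) :
    {j : Fin n | ∃ ℓ t, grp ℓ = j ∧ 0 < x ℓ t ∧ x ℓ t < 1}.ncard ≤ Fintype.card T := by
  classical
  by_contra hcon
  push_neg at hcon
  obtain ⟨hxP, hvert⟩ := hx
  obtain ⟨hb, hz, hk, hrow, hgr⟩ := hxP
  have hxP : MemP grp s f sz L ε x := ⟨hb, hz, hk, hrow, hgr⟩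
  set S : Set (Fin n) := {j : Fin n | ∃ ℓ t, grp ℓ = j ∧ 0 < x ℓ t ∧ x ℓ t < 1} with hSdef
  have hfin : S.Finite := Set.toFinite S
  have hcard : Fintype.card T + 1 ≤ hfin.toFinset.card := by
    rw [Set.ncard_eq_toFinset_card S hfin] at hcon
    omega
  obtain ⟨S0, hS0sub, hS0card⟩ := Finset.exists_subset_card_eq hcard
  have hS0mem : ∀ j ∈ S0, ∃ ℓ t, grp ℓ = j ∧ 0 < x ℓ t ∧ x ℓ t < 1 := by
    intro j hj
    have h1 := hS0sub hj
    rw [Set.Finite.mem_toFinset] at h1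
    exact h1
  have hmv : ∀ j ∈ S0, ∃ m : I → T → ℝ,
      (∃ p : I × T, m p.1 p.2 ≠ 0) ∧
      (∀ ℓ t, m ℓ t ≠ 0 → grp ℓ = j ∧ 0 < x ℓ t ∧ x ℓ t < 1) ∧
      (∀ ℓ, ∑ t, m ℓ t = 0) ∧
      (∀ t, ∑ ℓ ∈ univ.filter (fun ℓ => grp ℓ = j), x ℓ t = (L t j : ℝ) →
        ∑ ℓ ∈ univ.filter (fun ℓ => grp ℓ = j), m ℓ t = 0) :=
    fun j hj => movement grp s f sz L ε x hxP j (hS0mem j hj)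
  choose! mj hmj1 hmj2 hmj3 hmj4 using hmv
  have hcardS0 : Fintype.card ↥S0 = Fintype.card T + 1 := by
    rw [Fintype.card_coe, hS0card]
  set Φ : (↥S0 → ℝ) →ₗ[ℝ] (T → ℝ) :=
    { toFun := fun lam t => ∑ jj : ↥S0, lam jj * (∑ ℓ, mj ↑jj ℓ t * s ℓ),
      map_add' := by
        intro a b; funext t
        simp only [Pi.add_apply, add_mul, Finset.sum_add_distrib]
      map_smul' := by
        intro r a; funext t
        simp only [Pi.smul_apply, smul_eq_mul, RingHom.id_apply, Finset.mul_sum,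
          mul_assoc] } with hΦdef
  have hnotinj : ¬ Function.Injective Φ := by
    intro hinj
    have hle := LinearMap.finrank_le_finrank_of_injective hinj
    rw [Module.finrank_fintype_fun_eq_card, Module.finrank_fintype_fun_eq_card,
      hcardS0] at hle
    omega
  obtain ⟨lam, hlammem, hlamne⟩ := Submodule.exists_mem_ne_zero_of_ne_bot
    (fun h => hnotinj (LinearMap.ker_eq_bot.1 h))
  have hlam0 : Φ lam = 0 := hlammem
  set M : I → T → ℝ := fun ℓ t => ∑ jj : ↥S0, lam jj * mj ↑jj ℓ t with hMdef
  have hmjzero : ∀ jj : ↥S0, ∀ ℓ t, grp ℓ ≠ ↑jj → mj ↑jj ℓ t = 0 := by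
    intro jj ℓ t hne
    by_contra h
    exact hne (hmj2 ↑jj jj.2 ℓ t h).1
  have hmjzero' : ∀ jj : ↥S0, ∀ ℓ t, ¬(0 < x ℓ t ∧ x ℓ t < 1) → mj ↑jj ℓ t = 0 := by
    intro jj ℓ t hne
    by_contra h
    exact hne (hmj2 ↑jj jj.2 ℓ t h).2
  have hMzero : ∀ ℓ t, grp ℓ ∉ S0 → M ℓ t = 0 := by
    intro ℓ t h
    rw [hMdef]
    exact Finset.sum_eq_zero fun jj _ =>
      by rw [hmjzero jj ℓ t (fun hgrp => h (by rw [hgrp]; exact jj.2)), mul_zero]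
  have hMsupp : ∀ ℓ t, M ℓ t ≠ 0 → 0 < x ℓ t ∧ x ℓ t < 1 := by
    intro ℓ t h
    by_contra hcon2
    refine h ?_
    rw [hMdef]
    exact Finset.sum_eq_zero fun jj _ => by rw [hmjzero' jj ℓ t hcon2, mul_zero]
  have hMrow : ∀ ℓ, ∑ t, M ℓ t = 0 := by
    intro ℓ
    simp only [hMdef]
    rw [Finset.sum_comm]
    refine Finset.sum_eq_zero fun jj _ => ?_
    rw [← Finset.mul_sum, hmj3 ↑jj jj.2 ℓ, mul_zero]
  have hMsize : ∀ t, ∑ ℓ, M ℓ t * s ℓ = 0 := by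
    intro t
    have h0 : Φ lam t = 0 := by rw [hlam0]; rfl
    calc ∑ ℓ, M ℓ t * s ℓ
        = ∑ ℓ, ∑ jj : ↥S0, lam jj * mj ↑jj ℓ t * s ℓ := by
          simp only [hMdef, Finset.sum_mul]
      _ = ∑ jj : ↥S0, ∑ ℓ, lam jj * mj ↑jj ℓ t * s ℓ := Finset.sum_comm
      _ = ∑ jj : ↥S0, lam jj * ∑ ℓ, mj ↑jj ℓ t * s ℓ := by
          refine Finset.sum_congr rfl fun jj _ => ?_
          rw [Finset.mul_sum]
          exact Finset.sum_congr rfl fun ℓ _ => by ring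
      _ = Φ lam t := rfl
      _ = 0 := h0
  have hMgroup : ∀ (j' : Fin n) (t : T),
      ∑ ℓ ∈ univ.filter (fun ℓ => grp ℓ = j'), x ℓ t = (L t j' : ℝ) →
      ∑ ℓ ∈ univ.filter (fun ℓ => grp ℓ = j'), M ℓ t = 0 := by
    intro j' t htight
    by_cases h : j' ∈ S0
    · have hcal : ∑ ℓ ∈ univ.filter (fun ℓ => grp ℓ = j'), M ℓ t
          = lam ⟨j', h⟩ * ∑ ℓ ∈ univ.filter (fun ℓ => grp ℓ = j'), mj j' ℓ t := by
        rw [Finset.mul_sum]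
        refine Finset.sum_congr rfl fun ℓ hℓ => ?_
        have hgl : grp ℓ = j' := (Finset.mem_filter.1 hℓ).2
        have hzz : ∀ jj : ↥S0, jj ≠ (⟨j', h⟩ : ↥S0) → lam jj * mj (↑jj) ℓ t = 0 := by
          intro jj hne
          rw [hmjzero jj ℓ t (fun hgrp => hne (Subtype.ext (by rw [← hgrp, hgl]))),
            mul_zero]
        simp only [hMdef]
        exact Fintype.sum_eq_single (⟨j', h⟩ : ↥S0) hzz
      rw [hcal, hmj4 j' h t htight, mul_zero]
    · exact Finset.sum_eq_zero fun ℓ hℓ =>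
        hMzero ℓ t (by rw [(Finset.mem_filter.1 hℓ).2]; exact h)
  have hMslack : ∀ (j' : Fin n) (t : T),
      ∑ ℓ ∈ univ.filter (fun ℓ => grp ℓ = j'), M ℓ t ≠ 0 →
      ∑ ℓ ∈ univ.filter (fun ℓ => grp ℓ = j'), x ℓ t < (L t j' : ℝ) := by
    intro j' t hne
    rcases (hgr j' t).lt_or_eq with h | h
    · exact h
    · exact absurd (hMgroup j' t h) hne
  have hMne : ∃ p : I × T, M p.1 p.2 ≠ 0 := by
    have hex : ∃ jj : ↥S0, lam jj ≠ 0 := by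
      by_contra hcc
      push_neg at hcc
      exact hlamne (funext hcc)
    obtain ⟨jj, hjj⟩ := hex
    obtain ⟨p, hp⟩ := hmj1 ↑jj jj.2
    have hgl : grp p.1 = ↑jj := (hmj2 ↑jj jj.2 p.1 p.2 hp).1
    refine ⟨p, ?_⟩
    have hsingle : M p.1 p.2 = lam jj * mj ↑jj p.1 p.2 := by
      rw [hMdef]
      exact Fintype.sum_eq_single jj fun b hb => by
        rw [hmjzero b p.1 p.2 (fun hgb => hb (Subtype.ext (by rw [← hgb, hgl]))),
          mul_zero]
    rw [hsingle]
    exact mul_ne_zero hjj hp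
  obtain ⟨p0, hp0⟩ := hMne
  haveI hIT : Nonempty (I × T) := ⟨p0⟩
  haveI hnT : Nonempty (Fin n × T) := ⟨(grp p0.1, p0.2)⟩
  set g1 : I × T → ℝ := fun p =>
    if M p.1 p.2 = 0 then 1
    else min (x p.1 p.2) (1 - x p.1 p.2) / |M p.1 p.2| with hg1
  set g2 : Fin n × T → ℝ := fun q =>
    if (∑ ℓ ∈ univ.filter (fun ℓ => grp ℓ = q.1), M ℓ q.2) = 0 then 1
    else ((L q.2 q.1 : ℝ) - ∑ ℓ ∈ univ.filter (fun ℓ => grp ℓ = q.1), x ℓ q.2) /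
      |∑ ℓ ∈ univ.filter (fun ℓ => grp ℓ = q.1), M ℓ q.2| with hg2
  have hne1 : (univ : Finset (I × T)).Nonempty := univ_nonempty
  have hne2 : (univ : Finset (Fin n × T)).Nonempty := univ_nonempty
  set δ : ℝ := min ((univ : Finset (I × T)).inf' hne1 g1)
    ((univ : Finset (Fin n × T)).inf' hne2 g2) with hδdef
  have hδ1 : ∀ p : I × T, δ ≤ g1 p := fun p =>
    le_trans (min_le_left _ _) (Finset.inf'_le _ (mem_univ p))
  have hδ2 : ∀ q : Fin n × T, δ ≤ g2 q := fun q =>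
    le_trans (min_le_right _ _) (Finset.inf'_le _ (mem_univ q))
  have hδpos : 0 < δ := by
    rw [hδdef, lt_min_iff]
    constructor <;> rw [Finset.lt_inf'_iff]
    · intro q _
      rw [hg1]
      dsimp only
      split_ifs with h
      · norm_num
      · apply div_pos
        · have h2 := hMsupp q.1 q.2 h
          exact lt_min h2.1 (by linarith [h2.2])
        · exact abs_pos.2 h
    · intro q _
      rw [hg2]
      dsimp only
      split_ifs with h
      · norm_num
      · apply div_pos
        · linarith [hMslack q.1 q.2 h]
        · exact abs_pos.2 h
  have hkey : ∀ d : ℝ, |d| ≤ δ →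
      MemP grp s f sz L ε (fun ℓ t => x ℓ t + d * M ℓ t) := by
    intro d hd
    refine ⟨?_, ?_, ?_, ?_, ?_⟩
    · intro ℓ t
      dsimp only
      by_cases hM0 : M ℓ t = 0
      · simp only [hM0, mul_zero, add_zero]
        exact hb ℓ t
      · have habs : |d * M ℓ t| ≤ min (x ℓ t) (1 - x ℓ t) := by
          rw [abs_mul]
          calc |d| * |M ℓ t| ≤ g1 (ℓ, t) * |M ℓ t| :=
                mul_le_mul_of_nonneg_right (le_trans hd (hδ1 (ℓ, t))) (abs_nonneg _)
            _ = min (x ℓ t) (1 - x ℓ t) := by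
                rw [hg1]
                dsimp only
                rw [if_neg hM0, div_mul_cancel₀ _ (abs_ne_zero.2 hM0)]
        have h2 := abs_le.1 habs
        have h3 := min_le_left (x ℓ t) (1 - x ℓ t)
        have h4 := min_le_right (x ℓ t) (1 - x ℓ t)
        constructor
        · linarith [h2.1]
        · linarith [h2.2]
    · intro ℓ t hst
      have hx0 : x ℓ t = 0 := hz ℓ t hst
      have hM0 : M ℓ t = 0 := by
        by_contra h
        have h2 := (hMsupp ℓ t h).1
        rw [hx0] at h2
        exact lt_irrefl _ h2
      simp only [hx0, hM0, mul_zero, add_zero]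
    · intro t
      have heq : ∑ ℓ, (x ℓ t + d * M ℓ t) * s ℓ
          = ∑ ℓ, x ℓ t * s ℓ + d * ∑ ℓ, M ℓ t * s ℓ := by
        rw [Finset.mul_sum, ← Finset.sum_add_distrib]
        exact Finset.sum_congr rfl fun ℓ _ => by ring
      rw [heq, hMsize t, mul_zero, add_zero]
      exact hk t
    · intro ℓ
      rw [Finset.sum_add_distrib, hrow ℓ, ← Finset.mul_sum, hMrow ℓ, mul_zero, add_zero]
    · intro j' t
      rw [Finset.sum_add_distrib, ← Finset.mul_sum]
      by_cases hSM : (∑ ℓ ∈ univ.filter (fun ℓ => grp ℓ = j'), M ℓ t) = 0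
      · rw [hSM, mul_zero, add_zero]
        exact hgr j' t
      · have hsl := hMslack j' t hSM
        have habs : |d * ∑ ℓ ∈ univ.filter (fun ℓ => grp ℓ = j'), M ℓ t|
            ≤ (L t j' : ℝ) - ∑ ℓ ∈ univ.filter (fun ℓ => grp ℓ = j'), x ℓ t := by
          rw [abs_mul]
          calc |d| * |∑ ℓ ∈ univ.filter (fun ℓ => grp ℓ = j'), M ℓ t|
              ≤ g2 (j', t) * |∑ ℓ ∈ univ.filter (fun ℓ => grp ℓ = j'), M ℓ t| :=
                mul_le_mul_of_nonneg_right (le_trans hd (hδ2 (j', t))) (abs_nonneg _)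
            _ = _ := by
                rw [hg2]
                dsimp only
                rw [if_neg hSM, div_mul_cancel₀ _ (abs_ne_zero.2 hSM)]
        have h2 := (abs_le.1 habs).2
        linarith
  have hy := hkey δ (le_of_eq (abs_of_pos hδpos))
  have hz' := hkey (-δ) (le_of_eq (by rw [abs_neg, abs_of_pos hδpos]))
  have heq := hvert _ _ hy hz' (fun ℓ t => by
    show x ℓ t = ((x ℓ t + δ * M ℓ t) + (x ℓ t + (-δ) * M ℓ t)) / 2
    ring)
  have hfun := congrFun (congrFun heq p0.1) p0.2
  have h4 : 2 * δ * M p0.1 p0.2 = 0 := by linarith [hfun]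
  rcases mul_eq_zero.1 h4 with h | h
  · linarith
  · exact hp0 h
end

section
/- Let x be a vertex of the polytope P as above and let G_j be a fractional group. Then the number of items ℓ ∈ G_j with x_{ℓ,t} ∈ (0,1) for some t ∈ T is at most 2|T|. -/
open Finset

open Classical in
/-- Extend a vector indexed by `S ⊆ I × T` by zero. -/
noncomputable def Dfun {I T : Type*} (S : Finset (I × T)) (w : ↥S → ℝ) (ℓ : I) (t : T) : ℝ :=
  if h : (ℓ, t) ∈ S then w ⟨(ℓ, t), h⟩ else 0

lemma Dfun_add {I T : Type*} (S : Finset (I × T)) (w v : ↥S → ℝ) (ℓ : I) (t : T) :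
    Dfun S (w + v) ℓ t = Dfun S w ℓ t + Dfun S v ℓ t := by
  classical unfold Dfun; split <;> simp

lemma Dfun_smul {I T : Type*} (S : Finset (I × T)) (c : ℝ) (w : ↥S → ℝ) (ℓ : I) (t : T) :
    Dfun S (c • w) ℓ t = c * Dfun S w ℓ t := by
  classical unfold Dfun; split <;> simp

lemma Dfun_of_notMem {I T : Type*} (S : Finset (I × T)) (w : ↥S → ℝ) {ℓ : I} {t : T}
    (h : (ℓ, t) ∉ S) : Dfun S w ℓ t = 0 := by
  classical unfold Dfun; split <;> [exact absurd ‹_› h; rfl]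

lemma Dfun_mem {I T : Type*} (S : Finset (I × T)) (w : ↥S → ℝ) (p : ↥S) :
    Dfun S w p.1.1 p.1.2 = w p := by
  classical unfold Dfun
  split
  · rfl
  · exact absurd p.2 ‹_›

/-- If `x` is a vertex of the polytope `P` and group `G_j` is fractional, then the number
of items `ℓ ∈ G_j` with `x_{ℓ,t} ∈ (0,1)` for some `t ∈ T` is at most `2|T|`. -/
theorem stmt_9 {I T : Type*} [Fintype I] [Fintype T] {n : ℕ}
    (grp : I → Fin n) (s : I → ℝ) (f : T → ℝ) (sz : T → ℕ)
    (L : T → Fin n → ℕ) (ε : ℝ)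
    (hs : ∀ ℓ, 0 < s ℓ ∧ s ℓ ≤ 1) (hf : ∀ t, 0 < f t) (hε : 0 < ε ∧ ε < 1)
    (x : I → T → ℝ) (hx : IsVertexP grp s f sz L ε x)
    (j : Fin n) (hfrac : ∃ ℓ t, grp ℓ = j ∧ 0 < x ℓ t ∧ x ℓ t < 1) :
    {ℓ : I | grp ℓ = j ∧ ∃ t, 0 < x ℓ t ∧ x ℓ t < 1}.ncard ≤ 2 * Fintype.card T := by
  classical
  obtain ⟨⟨hbox, hzero, hcap, hsumx, hgrpx⟩, hxV⟩ := hx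
  by_contra hcon
  push_neg at hcon
  set F : Finset I := univ.filter (fun ℓ => grp ℓ = j ∧ ∃ t, 0 < x ℓ t ∧ x ℓ t < 1) with hFdef
  have hsetF : {ℓ : I | grp ℓ = j ∧ ∃ t, 0 < x ℓ t ∧ x ℓ t < 1} = ↑F := by
    ext ℓ; simp [hFdef]
  rw [hsetF, Set.ncard_coe_finset] at hcon
  set S : Finset (I × T) :=
    univ.filter (fun p => grp p.1 = j ∧ 0 < x p.1 p.2 ∧ x p.1 p.2 < 1) with hSdef
  have hmemS : ∀ p : I × T, p ∈ S ↔ grp p.1 = j ∧ 0 < x p.1 p.2 ∧ x p.1 p.2 < 1 := by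
    intro p; simp [hSdef]
  have hSF : ∀ p ∈ S, p.1 ∈ F := by
    intro p hp
    rw [hmemS] at hp
    simp only [hFdef, mem_filter, mem_univ, true_and]
    exact ⟨hp.1, p.2, hp.2⟩
  -- each fractional item has at least two fractional coordinates
  have hfib : ∀ ℓ ∈ F, 2 ≤ (S.filter fun p => p.1 = ℓ).card := by
    intro ℓ hℓ
    simp only [hFdef, mem_filter, mem_univ, true_and] at hℓ
    obtain ⟨hgj, t0, ht0⟩ := hℓ
    by_contra hle
    push_neg at hle
    have hone : ∀ t, t ≠ t0 → x ℓ t = 0 ∨ x ℓ t = 1 := by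
      intro t ht
      by_contra hno
      push_neg at hno
      have hfrac_t : 0 < x ℓ t ∧ x ℓ t < 1 :=
        ⟨lt_of_le_of_ne (hbox ℓ t).1 (Ne.symm hno.1), lt_of_le_of_ne (hbox ℓ t).2 hno.2⟩
      have h0 : (ℓ, t0) ∈ S.filter fun p => p.1 = ℓ := by
        simp only [mem_filter]
        exact ⟨(hmemS _).mpr ⟨hgj, ht0⟩, trivial⟩
      have h1 : (ℓ, t) ∈ S.filter fun p => p.1 = ℓ := by
        simp only [mem_filter]
        exact ⟨(hmemS _).mpr ⟨hgj, hfrac_t⟩, trivial⟩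
      have h2 : 1 < (S.filter fun p => p.1 = ℓ).card :=
        Finset.one_lt_card.mpr ⟨_, h0, _, h1, by simp [Ne.symm ht]⟩
      omega
    have hint : ∑ t ∈ univ.erase t0, x ℓ t =
        (((univ.erase t0).filter (fun t => x ℓ t = 1)).card : ℝ) := by
      rw [← Finset.sum_boole]
      refine Finset.sum_congr rfl fun t ht => ?_
      rcases hone t (Finset.ne_of_mem_erase ht) with h | h <;> simp [h]
    have htot : x ℓ t0 + ∑ t ∈ univ.erase t0, x ℓ t = 1 := by
      rw [Finset.add_sum_erase _ _ (mem_univ t0)]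
      exact hsumx ℓ
    set k := ((univ.erase t0).filter (fun t => x ℓ t = 1)).card
    have hk1 : (k : ℝ) < 1 := by rw [hint] at htot; linarith [ht0.1]
    have hk0 : k = 0 := by exact_mod_cast Nat.lt_one_iff.mp (by exact_mod_cast hk1)
    rw [hint, hk0] at htot
    simp at htot
    linarith [ht0.2]
  have hcards : S.card = ∑ ℓ ∈ F, (S.filter fun p => p.1 = ℓ).card :=
    Finset.card_eq_sum_card_fiberwise hSF
  have hS2 : 2 * F.card ≤ S.card := by
    rw [hcards]
    calc 2 * F.card = ∑ _ℓ ∈ F, 2 := by rw [Finset.sum_const, smul_eq_mul, mul_comm]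
      _ ≤ _ := Finset.sum_le_sum hfib
  -- the linear map
  let Φ : (↥S → ℝ) →ₗ[ℝ] (↥F → ℝ) × (T → ℝ) × (T → ℝ) :=
    { toFun := fun w =>
        (fun ℓ => ∑ t, Dfun S w ℓ.1 t,
         fun t => ∑ ℓ, Dfun S w ℓ t * s ℓ,
         fun t => ∑ ℓ ∈ univ.filter (fun ℓ => grp ℓ = j), Dfun S w ℓ t)
      map_add' := by
        intro w v
        refine Prod.ext ?_ (Prod.ext ?_ ?_) <;> funext <;>
          simp [Dfun_add, Finset.sum_add_distrib, add_mul]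
      map_smul' := by
        intro c w
        refine Prod.ext ?_ (Prod.ext ?_ ?_) <;> funext <;>
          simp [Dfun_smul, Finset.mul_sum, mul_assoc] }
  have hrk : Module.finrank ℝ ((↥F → ℝ) × (T → ℝ) × (T → ℝ)) < Module.finrank ℝ (↥S → ℝ) := by
    simp only [Module.finrank_prod, Module.finrank_fintype_fun_eq_card, Fintype.card_coe]
    omega
  have hker := LinearMap.ker_ne_bot_of_finrank_lt (f := Φ) hrk
  obtain ⟨w, hwker, hwne⟩ := (Submodule.ne_bot_iff _).mp hker
  have hΦw : Φ w = 0 := LinearMap.mem_ker.mp hwker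
  have h1 : ∀ (ℓ : ↥F), ∑ t, Dfun S w ℓ.1 t = 0 := by
    intro ℓ
    have := congrArg Prod.fst hΦw
    exact congrFun this ℓ
  have h2 : ∀ t, ∑ ℓ, Dfun S w ℓ t * s ℓ = 0 := by
    intro t
    have := congrArg (fun q => q.2.1) hΦw
    exact congrFun this t
  have h3 : ∀ t, ∑ ℓ ∈ univ.filter (fun ℓ => grp ℓ = j), Dfun S w ℓ t = 0 := by
    intro t
    have := congrArg (fun q => q.2.2) hΦw
    exact congrFun this t
  have hd_sum : ∀ ℓ, ∑ t, Dfun S w ℓ t = 0 := by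
    intro ℓ
    by_cases h : ℓ ∈ F
    · exact h1 ⟨ℓ, h⟩
    · refine Finset.sum_eq_zero fun t _ => Dfun_of_notMem S w fun hmem => h (hSF _ hmem)
  have hd_grp : ∀ (j' : Fin n) t, ∑ ℓ ∈ univ.filter (fun ℓ => grp ℓ = j'), Dfun S w ℓ t = 0 := by
    intro j' t
    by_cases hj : j' = j
    · subst hj; exact h3 t
    · refine Finset.sum_eq_zero fun ℓ hℓ => Dfun_of_notMem S w fun hmem => ?_
      simp only [mem_filter, mem_univ, true_and] at hℓ
      exact hj (hℓ ▸ ((hmemS _).mp hmem).1 ▸ rfl)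
  -- a nonzero coordinate
  obtain ⟨p, hp⟩ := Function.ne_iff.mp hwne
  have hp' : w p ≠ 0 := by simpa using hp
  have hdp : Dfun S w p.1.1 p.1.2 ≠ 0 := by rw [Dfun_mem]; exact hp'
  have hSne : S.Nonempty := ⟨p.1, p.2⟩
  set c := S.inf' hSne (fun q => min (x q.1 q.2) (1 - x q.1 q.2)) with hcdef
  have hc : 0 < c := by
    rw [hcdef]
    rw [Finset.lt_inf'_iff]
    intro q hq
    rw [hmemS] at hq
    exact lt_min hq.2.1 (by linarith [hq.2.2])
  set M := S.sup' hSne (fun q => |Dfun S w q.1 q.2|) with hMdef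
  have hM : 0 < M := lt_of_lt_of_le (abs_pos.mpr hdp) (Finset.le_sup' (fun q => |Dfun S w q.1 q.2|) p.2)
  have hbnd : ∀ q ∈ S, |Dfun S w q.1 q.2| ≤ M := fun q hq => hMdef ▸ Finset.le_sup' (fun q => |Dfun S w q.1 q.2|) hq
  set δ := c / M with hδdef
  have hδ : 0 < δ := div_pos hc hM
  have hbox' : ∀ (σ : ℝ), |σ| = 1 → ∀ ℓ t,
      0 ≤ x ℓ t + σ * δ * Dfun S w ℓ t ∧ x ℓ t + σ * δ * Dfun S w ℓ t ≤ 1 := by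
    intro σ hσ ℓ t
    by_cases h : (ℓ, t) ∈ S
    · have hb1 : |σ * δ * Dfun S w ℓ t| ≤ c := by
        rw [abs_mul, abs_mul, hσ, one_mul, abs_of_pos hδ]
        calc δ * |Dfun S w ℓ t| ≤ δ * M :=
              mul_le_mul_of_nonneg_left (hbnd (ℓ, t) h) (le_of_lt hδ)
          _ = c := by rw [hδdef]; field_simp
      have hb2 : c ≤ min (x ℓ t) (1 - x ℓ t) := Finset.inf'_le _ h
      have hb3 := le_min_iff.mp hb2
      have hb4 := abs_le.mp hb1
      constructor <;> [linarith [hb3.1, hb4.1]; linarith [hb3.2, hb4.2]]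
    · rw [Dfun_of_notMem S w h]
      simpa using hbox ℓ t
  have hMem : ∀ (σ : ℝ), |σ| = 1 →
      MemP grp s f sz L ε (fun ℓ t => x ℓ t + σ * δ * Dfun S w ℓ t) := by
    intro σ hσ
    refine ⟨hbox' σ hσ, ?_, ?_, ?_, ?_⟩
    · intro ℓ t hlt
      have hx0 : x ℓ t = 0 := hzero ℓ t hlt
      have hnotS : (ℓ, t) ∉ S := by
        rw [hmemS]
        rintro ⟨-, h0, -⟩
        rw [hx0] at h0
        exact lt_irrefl _ h0
      simp [Dfun_of_notMem S w hnotS, hx0]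
    · intro t
      have e1 : ∑ ℓ, (x ℓ t + σ * δ * Dfun S w ℓ t) * s ℓ
          = (∑ ℓ, x ℓ t * s ℓ) + σ * δ * (∑ ℓ, Dfun S w ℓ t * s ℓ) := by
        rw [Finset.mul_sum, ← Finset.sum_add_distrib]
        exact Finset.sum_congr rfl fun ℓ _ => by ring
      rw [e1, h2 t]
      simpa using hcap t
    · intro ℓ
      have e1 : ∑ t, (x ℓ t + σ * δ * Dfun S w ℓ t)
          = (∑ t, x ℓ t) + σ * δ * (∑ t, Dfun S w ℓ t) := by
        rw [Finset.mul_sum, ← Finset.sum_add_distrib]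
      rw [e1, hd_sum ℓ, hsumx ℓ]
      ring
    · intro j' t
      have e1 : ∑ ℓ ∈ univ.filter (fun ℓ => grp ℓ = j'), (x ℓ t + σ * δ * Dfun S w ℓ t)
          = (∑ ℓ ∈ univ.filter (fun ℓ => grp ℓ = j'), x ℓ t)
            + σ * δ * (∑ ℓ ∈ univ.filter (fun ℓ => grp ℓ = j'), Dfun S w ℓ t) := by
        rw [Finset.mul_sum, ← Finset.sum_add_distrib]
      rw [e1, hd_grp j' t]
      simpa using hgrpx j' t
  have hyz := hxV _ _ (hMem 1 (by norm_num)) (hMem (-1) (by norm_num)) (fun ℓ t => by ring)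
  have heq : x p.1.1 p.1.2 + 1 * δ * Dfun S w p.1.1 p.1.2
      = x p.1.1 p.1.2 + (-1) * δ * Dfun S w p.1.1 p.1.2 :=
    congrFun (congrFun hyz p.1.1) p.1.2
  have hδd : δ * Dfun S w p.1.1 p.1.2 = 0 := by linarith
  rcases mul_eq_zero.mp hδd with h | h
  · exact absurd h (ne_of_gt hδ)
  · exact hdp h
end

section
/- Let x be a vertex of the polytope P as above. Then the total number of items ℓ ∈ I that are fractional, i.e., for which there exists t ∈ T with x_{ℓ,t} ∈ (0,1), is at most 2|T|², hence O(1) when |T| is constant. -/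
attribute [local instance] Classical.propDecidable

set_option maxHeartbeats 1000000

/-- If the entries of `g` on `A` lie in `[0,1]` and sum to an integer, then the number of
fractional entries cannot be exactly one. -/
lemma not_one_frac {α : Type*} (A : Finset α) (g : α → ℝ)
    (h01 : ∀ a ∈ A, 0 ≤ g a ∧ g a ≤ 1) (m : ℤ) (hsum : ∑ a ∈ A, g a = m) :
    (A.filter fun a => 0 < g a ∧ g a < 1).card ≠ 1 := by
  intro hone
  obtain ⟨a0, ha0⟩ := Finset.card_eq_one.1 hone
  have hsplit := Finset.sum_filter_add_sum_filter_not A (fun a => 0 < g a ∧ g a < 1) g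
  rw [ha0, Finset.sum_singleton] at hsplit
  have ha0A : a0 ∈ A ∧ (0 < g a0 ∧ g a0 < 1) := by
    have : a0 ∈ A.filter fun a => 0 < g a ∧ g a < 1 := by rw [ha0]; exact Finset.mem_singleton_self _
    exact ⟨(Finset.mem_filter.1 this).1, (Finset.mem_filter.1 this).2⟩
  set B := A.filter fun a => ¬(0 < g a ∧ g a < 1) with hB
  have hx : ∀ a ∈ B, g a = if g a = 1 then 1 else 0 := by
    intro a ha
    rw [hB, Finset.mem_filter] at ha
    obtain ⟨h0, h1⟩ := h01 a ha.1
    rcases eq_or_lt_of_le h1 with h | h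
    · simp [h]
    · have hg0 : g a = 0 := by
        by_contra hne
        exact ha.2 ⟨lt_of_le_of_ne h0 (Ne.symm hne), h⟩
      have : g a ≠ 1 := by rw [hg0]; norm_num
      simp [hg0, this]
  have hBsum : ∑ a ∈ B, g a = ((B.filter fun a => g a = 1).card : ℝ) := by
    rw [Finset.sum_congr rfl hx, Finset.sum_boole]
  have hval : g a0 = ((m - ((B.filter fun a => g a = 1).card : ℤ) : ℤ) : ℝ) := by
    rw [hBsum, hsum] at hsplit
    push_cast
    linarith
  have h1' : (0:ℤ) < m - ((B.filter fun a => g a = 1).card : ℤ) := by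
    exact_mod_cast hval ▸ ha0A.2.1
  have h2' : m - ((B.filter fun a => g a = 1).card : ℤ) < 1 := by
    exact_mod_cast hval ▸ ha0A.2.2
  omega



open Finset

/-- Perturbation lemma: a direction satisfying the tight constraints must be zero at a vertex. -/
lemma vertex_dir {I T : Type*} [Fintype I] [Fintype T] {n : ℕ}
    (grp : I → Fin n) (s : I → ℝ) (f : T → ℝ) (sz : T → ℕ)
    (L : T → Fin n → ℕ) (ε : ℝ) (x : I → T → ℝ)
    (hx : IsVertexP grp s f sz L ε x) (d : I → T → ℝ)
    (h0 : ∀ ℓ t, ¬(0 < x ℓ t ∧ x ℓ t < 1) → d ℓ t = 0)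
    (hcap : ∀ t, ∑ ℓ, d ℓ t * s ℓ = 0)
    (hitem : ∀ ℓ, ∑ t, d ℓ t = 0)
    (hgrp : ∀ (j : Fin n) (t : T),
      (∑ ℓ ∈ univ.filter (fun ℓ => grp ℓ = j), x ℓ t) = L t j →
      ∑ ℓ ∈ univ.filter (fun ℓ => grp ℓ = j), d ℓ t = 0) :
    d = 0 := by
  obtain ⟨hmem, hvert⟩ := hx
  obtain ⟨hbox, hzero, hcapx, hitemx, hgrpx⟩ := hmem
  set gd : Fin n → T → ℝ := fun j t => ∑ ℓ ∈ univ.filter (fun ℓ => grp ℓ = j), d ℓ t with hgd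
  set gxs : Fin n → T → ℝ := fun j t => ∑ ℓ ∈ univ.filter (fun ℓ => grp ℓ = j), x ℓ t with hgxs
  set A : Finset ℝ := (univ : Finset (I × T)).image
    (fun p => if d p.1 p.2 = 0 then 1 else min (x p.1 p.2) (1 - x p.1 p.2) / |d p.1 p.2|) with hA
  set B : Finset ℝ := (univ : Finset (Fin n × T)).image
    (fun q => if gd q.1 q.2 = 0 then 1 else ((L q.2 q.1 : ℝ) - gxs q.1 q.2) / |gd q.1 q.2|) with hB
  set S : Finset ℝ := insert 1 (A ∪ B) with hS
  have hSne : S.Nonempty := ⟨1, by simp [hS]⟩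
  set δ : ℝ := S.min' hSne with hδ
  have hpos : 0 < δ := by
    rw [hδ]
    apply (Finset.lt_min'_iff S hSne).2
    intro r hr
    rw [hS] at hr
    rcases Finset.mem_insert.1 hr with h | h
    · simp [h]
    rcases Finset.mem_union.1 h with h | h
    · rw [hA] at h
      obtain ⟨p, -, rfl⟩ := Finset.mem_image.1 h
      by_cases hd : d p.1 p.2 = 0
      · simp [hd]
      · simp only [hd, if_false]
        have hfrac : 0 < x p.1 p.2 ∧ x p.1 p.2 < 1 := by
          by_contra hc; exact hd (h0 _ _ hc)
        exact div_pos (lt_min hfrac.1 (by linarith [hfrac.2])) (abs_pos.2 hd)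
    · rw [hB] at h
      obtain ⟨q, -, rfl⟩ := Finset.mem_image.1 h
      by_cases hd : gd q.1 q.2 = 0
      · simp [hd]
      · simp only [hd, if_false]
        have hne : gxs q.1 q.2 ≠ (L q.2 q.1 : ℝ) := fun hc => hd (hgrp _ _ hc)
        have hle := hgrpx q.1 q.2
        exact div_pos (by rw [hgxs] at hne ⊢; simp only at hle ⊢; linarith [lt_of_le_of_ne hle hne]) (abs_pos.2 hd)
  have hbnd : ∀ ℓ t, |δ * d ℓ t| ≤ min (x ℓ t) (1 - x ℓ t) ∨ d ℓ t = 0 := by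
    intro ℓ t
    by_cases hd : d ℓ t = 0
    · right; exact hd
    · left
      have hmem' : (min (x ℓ t) (1 - x ℓ t) / |d ℓ t|) ∈ S := by
        rw [hS]
        refine Finset.mem_insert_of_mem (Finset.mem_union_left _ ?_)
        rw [hA]
        exact Finset.mem_image.2 ⟨(ℓ, t), Finset.mem_univ _, by simp [hd]⟩
      have hδle := Finset.min'_le S _ hmem'
      rw [abs_mul, abs_of_pos hpos]
      calc δ * |d ℓ t| ≤ (min (x ℓ t) (1 - x ℓ t) / |d ℓ t|) * |d ℓ t| := by
            apply mul_le_mul_of_nonneg_right _ (abs_nonneg _)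
            exact hδ ▸ hδle
        _ = min (x ℓ t) (1 - x ℓ t) := by field_simp
  have hbndg : ∀ (j : Fin n) t, |δ * gd j t| ≤ (L t j : ℝ) - gxs j t ∨ gd j t = 0 := by
    intro j t
    by_cases hd : gd j t = 0
    · right; exact hd
    · left
      have hmem' : (((L t j : ℝ) - gxs j t) / |gd j t|) ∈ S := by
        rw [hS]
        refine Finset.mem_insert_of_mem (Finset.mem_union_right _ ?_)
        rw [hB]
        exact Finset.mem_image.2 ⟨(j, t), Finset.mem_univ _, by simp [hd]⟩
      have hδle := Finset.min'_le S _ hmem'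
      rw [abs_mul, abs_of_pos hpos]
      calc δ * |gd j t| ≤ (((L t j : ℝ) - gxs j t) / |gd j t|) * |gd j t| := by
            apply mul_le_mul_of_nonneg_right _ (abs_nonneg _)
            exact hδ ▸ hδle
        _ = (L t j : ℝ) - gxs j t := by field_simp
  have hmemP : ∀ c : ℝ, |c| = δ → MemP grp s f sz L ε (fun ℓ t => x ℓ t + c * d ℓ t) := by
    intro c hc
    refine ⟨?_, ?_, ?_, ?_, ?_⟩
    · intro ℓ t
      show 0 ≤ x ℓ t + c * d ℓ t ∧ x ℓ t + c * d ℓ t ≤ 1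
      rcases hbnd ℓ t with h | h
      · have h1 : |c * d ℓ t| ≤ min (x ℓ t) (1 - x ℓ t) := by
          rw [abs_mul, hc]
          rwa [abs_mul, abs_of_pos hpos] at h
        have h2 := abs_le.1 h1
        have h3 := min_le_left (x ℓ t) (1 - x ℓ t)
        have h4 := min_le_right (x ℓ t) (1 - x ℓ t)
        constructor <;> linarith [h2.1, h2.2]
      · simp [h]; exact hbox ℓ t
    · intro ℓ t ht
      have hx0 := hzero ℓ t ht
      have hd0 : d ℓ t = 0 := h0 ℓ t (by rw [hx0]; intro hcon; linarith [hcon.1])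
      simp [hx0, hd0]
    · intro t
      have : ∑ ℓ, (x ℓ t + c * d ℓ t) * s ℓ = ∑ ℓ, x ℓ t * s ℓ + c * ∑ ℓ, d ℓ t * s ℓ := by
        rw [Finset.mul_sum, ← Finset.sum_add_distrib]
        congr 1; ext ℓ; ring
      rw [this, hcap t]
      simpa using hcapx t
    · intro ℓ
      rw [Finset.sum_add_distrib, hitemx ℓ, ← Finset.mul_sum, hitem ℓ]
      ring
    · intro j t
      have hsplit : ∑ ℓ ∈ univ.filter (fun ℓ => grp ℓ = j), (x ℓ t + c * d ℓ t)
          = gxs j t + c * gd j t := by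
        rw [hgxs, hgd, Finset.mul_sum, ← Finset.sum_add_distrib]
      rw [hsplit]
      rcases hbndg j t with h | h
      · have h1 : |c * gd j t| ≤ (L t j : ℝ) - gxs j t := by
          rw [abs_mul, hc]
          rwa [abs_mul, abs_of_pos hpos] at h
        have := (abs_le.1 h1).2
        linarith
      · rw [h]; simpa using hgrpx j t
  have hy := hmemP δ (abs_of_pos hpos)
  have hz := hmemP (-δ) (by rw [abs_neg, abs_of_pos hpos])
  have heq := hvert _ _ hy hz (fun ℓ t => by ring)
  funext ℓ t
  have h1 := congrFun (congrFun heq ℓ) t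
  have h2 : 2 * δ * d ℓ t = 0 := by linarith
  rcases mul_eq_zero.1 h2 with h | h
  · exfalso; rcases mul_eq_zero.1 h with h | h <;> [norm_num at h; linarith]
  · simpa using h

/-- If `x` is a vertex of the polytope `P`, then the total number of fractional items,
i.e. items `ℓ` for which there exists `t ∈ T` with `x_{ℓ,t} ∈ (0,1)`, is at most
`2|T|²` (hence `O(1)` when `|T|` is constant). -/
theorem stmt_10 {I T : Type*} [Fintype I] [Fintype T] {n : ℕ}
    (grp : I → Fin n) (s : I → ℝ) (f : T → ℝ) (sz : T → ℕ)
    (L : T → Fin n → ℕ) (ε : ℝ)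
    (hs : ∀ ℓ, 0 < s ℓ ∧ s ℓ ≤ 1) (hf : ∀ t, 0 < f t) (hε : 0 < ε ∧ ε < 1)
    (x : I → T → ℝ) (hx : IsVertexP grp s f sz L ε x) :
    {ℓ : I | ∃ t, 0 < x ℓ t ∧ x ℓ t < 1}.ncard ≤ 2 * Fintype.card T ^ 2 := by
  classical
  obtain ⟨⟨hbox, hzero, hcapx, hitemx, hgrpx⟩, -⟩ := id hx
  set fr : I → T → Prop := fun ℓ t => 0 < x ℓ t ∧ x ℓ t < 1 with hfr
  set V : Finset (I × T) := univ.filter (fun p => fr p.1 p.2) with hVdef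
  set FI : Finset I := univ.filter (fun ℓ => ∃ t, fr ℓ t) with hFIdef
  have hset : {ℓ : I | ∃ t, 0 < x ℓ t ∧ x ℓ t < 1} = ↑FI := by
    ext ℓ; simp [hFIdef, hfr]
  rw [hset, Set.ncard_coe_finset]
  -- trivial case |T| = 0
  rcases Nat.eq_zero_or_pos (Fintype.card T) with hT0 | hT1
  · have hTe : IsEmpty T := Fintype.card_eq_zero_iff.mp hT0
    have : FI = ∅ := by
      ext ℓ; simp [hFIdef, hTe.false]
    simp [this]
  -- group sums and index sets
  set gx : Fin n → T → ℝ := fun j t => ∑ ℓ ∈ univ.filter (fun ℓ => grp ℓ = j), x ℓ t with hgxdef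
  set Sj : Fin n → Finset T := fun j => univ.filter (fun t => ∃ ℓ, grp ℓ = j ∧ fr ℓ t) with hSjdef
  set Tt : Fin n → Finset T := fun j => (Sj j).filter (fun t => gx j t = L t j) with hTtdef
  set Qj : Fin n → Finset T :=
    fun j => if h : Tt j = Sj j ∧ (Sj j).Nonempty then (Sj j).erase h.2.choose else Tt j with hQjdef
  set Q : Finset (Fin n × T) := univ.filter (fun q => q.2 ∈ Qj q.1) with hQdef
  -- the extension map
  set ed : (({p : I × T // p ∈ V} → ℝ)) → I → T → ℝ :=
    fun v ℓ t => if h : (ℓ, t) ∈ V then v ⟨(ℓ, t), h⟩ else 0 with hed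
  have hmemV : ∀ ℓ t, (ℓ, t) ∈ V ↔ fr ℓ t := by
    intro ℓ t; simp [hVdef]
  have hmemFI : ∀ ℓ, ℓ ∈ FI ↔ ∃ t, fr ℓ t := by
    intro ℓ; simp [hFIdef]
  have hmemSj : ∀ j t, t ∈ Sj j ↔ ∃ ℓ, grp ℓ = j ∧ fr ℓ t := by
    intro j t; simp [hSjdef]
  have hed0 : ∀ v ℓ t, ¬ fr ℓ t → ed v ℓ t = 0 := by
    intro v ℓ t h
    rw [hed]
    simp only
    rw [dif_neg (fun hc => h ((hmemV ℓ t).1 hc))]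
  -- the linear map
  set Φ : ({p : I × T // p ∈ V} → ℝ) →ₗ[ℝ]
      ((T ⊕ ({ℓ : I // ℓ ∈ FI} ⊕ {q : Fin n × T // q ∈ Q})) → ℝ) :=
    { toFun := fun v => Sum.elim (fun t => ∑ ℓ, ed v ℓ t * s ℓ)
        (Sum.elim (fun ℓ => ∑ t, ed v ℓ.1 t)
          (fun q => ∑ ℓ ∈ univ.filter (fun ℓ => grp ℓ = q.1.1), ed v ℓ q.1.2)),
      map_add' := by
        intro v w
        have hea : ∀ ℓ t, ed (v + w) ℓ t = ed v ℓ t + ed w ℓ t := by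
          intro ℓ t
          rw [hed]
          simp only
          by_cases h : (ℓ, t) ∈ V <;> simp [h]
        funext e
        rcases e with t | e
        · simp only [Sum.elim_inl, Pi.add_apply]
          rw [← Finset.sum_add_distrib]
          exact Finset.sum_congr rfl fun ℓ _ => by rw [hea]; ring
        rcases e with ℓ | q
        · simp only [Sum.elim_inr, Sum.elim_inl, Pi.add_apply]
          rw [← Finset.sum_add_distrib]
          exact Finset.sum_congr rfl fun t _ => by rw [hea]
        · simp only [Sum.elim_inr, Pi.add_apply]
          rw [← Finset.sum_add_distrib]
          exact Finset.sum_congr rfl fun ℓ _ => by rw [hea]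
      map_smul' := by
        intro c v
        have hea : ∀ ℓ t, ed (c • v) ℓ t = c * ed v ℓ t := by
          intro ℓ t
          rw [hed]
          simp only
          by_cases h : (ℓ, t) ∈ V <;> simp [h]
        funext e
        rcases e with t | e
        · simp only [Sum.elim_inl, RingHom.id_apply, Pi.smul_apply, smul_eq_mul]
          rw [Finset.mul_sum]
          exact Finset.sum_congr rfl fun ℓ _ => by rw [hea]; ring
        rcases e with ℓ | q
        · simp only [Sum.elim_inr, Sum.elim_inl, RingHom.id_apply, Pi.smul_apply, smul_eq_mul]
          rw [Finset.mul_sum]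
          exact Finset.sum_congr rfl fun t _ => by rw [hea]
        · simp only [Sum.elim_inr, RingHom.id_apply, Pi.smul_apply, smul_eq_mul]
          rw [Finset.mul_sum]
          exact Finset.sum_congr rfl fun ℓ _ => by rw [hea] } with hΦ
  -- injectivity
  have hinj : Function.Injective Φ := by
    rw [injective_iff_map_eq_zero]
    intro v hv
    set d : I → T → ℝ := ed v with hd
    have hcapd : ∀ t, ∑ ℓ, d ℓ t * s ℓ = 0 := fun t => congrFun hv (Sum.inl t)
    have hitemd : ∀ ℓ, ∑ t, d ℓ t = 0 := by
      intro ℓ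
      by_cases h : ℓ ∈ FI
      · exact congrFun hv (Sum.inr (Sum.inl ⟨ℓ, h⟩))
      · apply Finset.sum_eq_zero
        intro t _
        apply hed0
        intro hfrt
        exact h ((hmemFI ℓ).2 ⟨t, hfrt⟩)
    have hQd : ∀ (j : Fin n) (t : T), t ∈ Qj j →
        ∑ ℓ ∈ univ.filter (fun ℓ => grp ℓ = j), d ℓ t = 0 := by
      intro j t ht
      have hq : (j, t) ∈ Q := by rw [hQdef]; simp [ht]
      exact congrFun hv (Sum.inr (Sum.inr ⟨(j, t), hq⟩))
    have hgrpd : ∀ (j : Fin n) (t : T), gx j t = L t j →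
        ∑ ℓ ∈ univ.filter (fun ℓ => grp ℓ = j), d ℓ t = 0 := by
      intro j t htight
      by_cases hQmem : t ∈ Qj j
      · exact hQd j t hQmem
      by_cases hSmem : t ∈ Sj j
      · -- t is the erased element
        have hcond : Tt j = Sj j ∧ (Sj j).Nonempty := by
          by_contra hc
          rw [hQjdef] at hQmem
          simp only [dif_neg hc] at hQmem
          exact hQmem (by rw [hTtdef]; exact Finset.mem_filter.2 ⟨hSmem, htight⟩)
        have hQeq : Qj j = (Sj j).erase hcond.2.choose := by
          rw [hQjdef]; simp only [dif_pos hcond]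
        have htc : t = hcond.2.choose := by
          by_contra hne
          exact hQmem (hQeq ▸ Finset.mem_erase.2 ⟨hne, hSmem⟩)
        -- sum over Sj j of group sums is zero
        have hsumS : ∑ t' ∈ Sj j, ∑ ℓ ∈ univ.filter (fun ℓ => grp ℓ = j), d ℓ t' = 0 := by
          rw [Finset.sum_comm]
          apply Finset.sum_eq_zero
          intro ℓ hℓ
          have hgrpℓ : grp ℓ = j := (Finset.mem_filter.1 hℓ).2
          have hfull : ∑ t' ∈ Sj j, d ℓ t' = ∑ t', d ℓ t' := by
            apply Finset.sum_subset (Finset.subset_univ _)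
            intro t' _ ht'
            apply hed0
            intro hfrt
            exact ht' ((hmemSj j t').2 ⟨ℓ, hgrpℓ, hfrt⟩)
          rw [hfull, hitemd ℓ]
        have hsplit : ∑ t' ∈ Sj j, ∑ ℓ ∈ univ.filter (fun ℓ => grp ℓ = j), d ℓ t'
            = (∑ ℓ ∈ univ.filter (fun ℓ => grp ℓ = j), d ℓ t)
              + ∑ t' ∈ (Sj j).erase t, ∑ ℓ ∈ univ.filter (fun ℓ => grp ℓ = j), d ℓ t' := by
          exact (Finset.add_sum_erase _ _ hSmem).symm
        have hrest : ∑ t' ∈ (Sj j).erase t, ∑ ℓ ∈ univ.filter (fun ℓ => grp ℓ = j), d ℓ t' = 0 := by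
          apply Finset.sum_eq_zero
          intro t' ht'
          apply hQd
          rw [hQeq, ← htc]
          exact ht'
        rw [hsumS, hrest] at hsplit
        linarith
      · -- no fractional entries in this column of the group
        apply Finset.sum_eq_zero
        intro ℓ hℓ
        apply hed0
        intro hfrt
        exact hSmem ((hmemSj j t).2 ⟨ℓ, (Finset.mem_filter.1 hℓ).2, hfrt⟩)
    have hdz : d = 0 := by
      apply vertex_dir grp s f sz L ε x hx d _ hcapd hitemd
      · intro j t ht
        exact hgrpd j t ht
      · intro ℓ t h
        exact hed0 v ℓ t h
    funext p
    have := congrFun (congrFun hdz p.1.1) p.1.2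
    rw [hd, hed] at this
    simp only at this
    rw [dif_pos p.2] at this
    simpa using this
  -- cardinality bound from injectivity
  have hcard : V.card ≤ Fintype.card T + (FI.card + Q.card) := by
    have h1 := LinearMap.finrank_le_finrank_of_injective hinj
    rw [Module.finrank_pi, Module.finrank_pi] at h1
    rwa [Fintype.card_coe, Fintype.card_sum, Fintype.card_sum, Fintype.card_coe,
      Fintype.card_coe] at h1
  -- counting
  set cT : ℕ := Fintype.card T with hcT
  set rowS : I → Finset T := fun ℓ => univ.filter (fun t => fr ℓ t) with hrowS
  set colS : Fin n → T → Finset I := fun j t => univ.filter (fun ℓ => grp ℓ = j ∧ fr ℓ t) with hcolS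
  set vF : Fin n → ℕ := fun j => (V.filter fun p => grp p.1 = j).card with hvF
  set kF : Fin n → ℕ := fun j => (FI.filter fun ℓ => grp ℓ = j).card with hkF
  -- each fractional item has at least two fractional entries
  have hrow2 : ∀ ℓ ∈ FI, 2 ≤ (rowS ℓ).card := by
    intro ℓ hℓ
    have hne1 : (rowS ℓ).card ≠ 1 := by
      have := not_one_frac (univ : Finset T) (fun t => x ℓ t) (fun t _ => hbox ℓ t) 1
        (by rw [hitemx ℓ]; norm_num)
      simpa [hrowS, hfr] using this
    have hpos : 0 < (rowS ℓ).card := by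
      obtain ⟨t, hfrt⟩ := (hmemFI ℓ).1 hℓ
      exact Finset.card_pos.2 ⟨t, Finset.mem_filter.2 ⟨Finset.mem_univ _, hfrt⟩⟩
    omega
  -- each fractional column in a tight group constraint has at least two fractional entries
  have hcol1 : ∀ (j : Fin n), ∀ t ∈ Sj j, 1 ≤ (colS j t).card := by
    intro j t ht
    obtain ⟨ℓ, hg, hfrt⟩ := (hmemSj j t).1 ht
    exact Finset.card_pos.2 ⟨ℓ, Finset.mem_filter.2 ⟨Finset.mem_univ _, hg, hfrt⟩⟩
  have hcol2 : ∀ (j : Fin n), ∀ t ∈ Tt j, 2 ≤ (colS j t).card := by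
    intro j t ht
    rw [hTtdef] at ht
    obtain ⟨htS, htight⟩ := Finset.mem_filter.1 ht
    have hne1 : (colS j t).card ≠ 1 := by
      have := not_one_frac (univ.filter (fun ℓ => grp ℓ = j)) (fun ℓ => x ℓ t)
        (fun ℓ _ => hbox ℓ t) (L t j) (by rw [hgxdef] at htight; push_cast; exact htight)
      have heq : (univ.filter (fun ℓ => grp ℓ = j)).filter (fun ℓ => 0 < x ℓ t ∧ x ℓ t < 1)
          = colS j t := by
        rw [hcolS, Finset.filter_filter]
      rwa [heq] at this
    have := hcol1 j t htS
    omega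
  -- fiberwise decompositions
  have hVsum : V.card = ∑ j, vF j :=
    Finset.card_eq_sum_card_fiberwise (fun p _ => Finset.mem_univ (grp p.1))
  have hFIsum : FI.card = ∑ j, kF j :=
    Finset.card_eq_sum_card_fiberwise (fun ℓ _ => Finset.mem_univ (grp ℓ))
  have hQsum : Q.card = ∑ j, (Qj j).card := by
    rw [Finset.card_eq_sum_card_fiberwise (f := fun q : Fin n × T => q.1)
      (t := univ) (fun q _ => Finset.mem_univ q.1)]
    apply Finset.sum_congr rfl
    intro j _
    have : Q.filter (fun q => q.1 = j) = (Qj j).image (fun t => (j, t)) := by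
      ext ⟨a, b⟩
      simp only [Finset.mem_filter, Finset.mem_image, hQdef, Finset.mem_univ, true_and]
      constructor
      · rintro ⟨h1, rfl⟩; exact ⟨b, h1, rfl⟩
      · rintro ⟨t, ht, h⟩
        obtain ⟨h1, h2⟩ := Prod.mk.injEq _ _ _ _ ▸ h
        cases h
        exact ⟨ht, rfl⟩
    rw [this, Finset.card_image_of_injective _ (fun a b h => (Prod.mk.injEq _ _ _ _ ▸ h).2)]
  -- row decomposition of vF
  have hvrow : ∀ j, 2 * kF j ≤ vF j := by
    intro j
    have hdec : vF j = ∑ ℓ ∈ FI.filter (fun ℓ => grp ℓ = j),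
        ((V.filter fun p => grp p.1 = j).filter (fun p => p.1 = ℓ)).card := by
      apply Finset.card_eq_sum_card_fiberwise
      intro p hp
      obtain ⟨hpV, hpg⟩ := Finset.mem_filter.1 hp
      refine Finset.mem_filter.2 ⟨(hmemFI p.1).2 ⟨p.2, (hmemV p.1 p.2).1 hpV⟩, hpg⟩
    have hfib : ∀ ℓ ∈ FI.filter (fun ℓ => grp ℓ = j),
        ((V.filter fun p => grp p.1 = j).filter (fun p => p.1 = ℓ)).card = (rowS ℓ).card := by
      intro ℓ hℓ
      obtain ⟨hℓFI, hℓg⟩ := Finset.mem_filter.1 hℓ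
      have : (V.filter fun p => grp p.1 = j).filter (fun p => p.1 = ℓ)
          = (rowS ℓ).image (fun t => (ℓ, t)) := by
        ext ⟨a, b⟩
        simp only [Finset.mem_filter, Finset.mem_image, hrowS, hVdef, Finset.mem_univ, true_and]
        constructor
        · rintro ⟨⟨h1, h2⟩, rfl⟩; exact ⟨b, h1, rfl⟩
        · rintro ⟨t, ht, h⟩
          cases h
          exact ⟨⟨ht, hℓg⟩, rfl⟩
      rw [this, Finset.card_image_of_injective _ (fun a b h => (Prod.mk.injEq _ _ _ _ ▸ h).2)]
    have h2 : ∀ ℓ ∈ FI.filter (fun ℓ => grp ℓ = j),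
        2 ≤ ((V.filter fun p => grp p.1 = j).filter (fun p => p.1 = ℓ)).card := by
      intro ℓ hℓ
      rw [hfib ℓ hℓ]
      exact hrow2 ℓ (Finset.mem_filter.1 hℓ).1
    calc 2 * kF j = (FI.filter (fun ℓ => grp ℓ = j)).card * 2 := by rw [hkF]; ring
      _ ≤ ∑ ℓ ∈ FI.filter (fun ℓ => grp ℓ = j),
            ((V.filter fun p => grp p.1 = j).filter (fun p => p.1 = ℓ)).card := by
          rw [← smul_eq_mul]
          exact Finset.card_nsmul_le_sum _ _ _ h2
      _ = vF j := hdec.symm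
  -- column decomposition of vF
  have hvcol : ∀ j, vF j = ∑ t ∈ Sj j, (colS j t).card := by
    intro j
    have hdec : vF j = ∑ t ∈ Sj j,
        ((V.filter fun p => grp p.1 = j).filter (fun p => p.2 = t)).card := by
      apply Finset.card_eq_sum_card_fiberwise
      intro p hp
      obtain ⟨hpV, hpg⟩ := Finset.mem_filter.1 hp
      exact (hmemSj j p.2).2 ⟨p.1, hpg, (hmemV p.1 p.2).1 hpV⟩
    rw [hdec]
    apply Finset.sum_congr rfl
    intro t _
    have : (V.filter fun p => grp p.1 = j).filter (fun p => p.2 = t)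
        = (colS j t).image (fun ℓ => (ℓ, t)) := by
      ext ⟨a, b⟩
      simp only [Finset.mem_filter, Finset.mem_image, hcolS, hVdef, Finset.mem_univ, true_and]
      constructor
      · rintro ⟨⟨h1, h2⟩, rfl⟩; exact ⟨a, ⟨h2, h1⟩, rfl⟩
      · rintro ⟨ℓ, ⟨hg, hfrt⟩, h⟩
        cases h
        exact ⟨⟨hfrt, hg⟩, rfl⟩
    rw [this, Finset.card_image_of_injective _ (fun a b h => (Prod.mk.injEq _ _ _ _ ▸ h).1)]
  -- per-group key inequality
  have hkey : ∀ j, (Sj j).Nonempty → kF j + (Qj j).card + 1 ≤ vF j := by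
    intro j hne
    have h2k := hvrow j
    by_cases hc : Tt j = Sj j ∧ (Sj j).Nonempty
    · have hQeq : Qj j = (Sj j).erase hc.2.choose := by rw [hQjdef]; simp only [dif_pos hc]
      have hchm : hc.2.choose ∈ Sj j := hc.2.choose_spec
      have hQcard : (Qj j).card = (Sj j).card - 1 := by
        rw [hQeq, Finset.card_erase_of_mem hchm]
      have hScard : 1 ≤ (Sj j).card := Finset.card_pos.2 hne
      have hv2S : 2 * (Sj j).card ≤ vF j := by
        rw [hvcol j]
        calc 2 * (Sj j).card = (Sj j).card * 2 := by ring
          _ ≤ ∑ t ∈ Sj j, (colS j t).card := by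
              rw [← smul_eq_mul]
              exact Finset.card_nsmul_le_sum _ _ _ (fun t ht => hcol2 j t (hc.1 ▸ ht))
      omega
    · have hQeq : Qj j = Tt j := by rw [hQjdef]; simp only [dif_neg hc]
      have hTne : Tt j ≠ Sj j := fun h => hc ⟨h, hne⟩
      have hTsub : Tt j ⊆ Sj j := by rw [hTtdef]; exact Finset.filter_subset _ _
      have hsd : (Sj j \ Tt j).Nonempty := by
        rw [Finset.sdiff_nonempty]
        intro hsub
        exact hTne (Finset.Subset.antisymm hTsub hsub)
      have hsplit : ∑ t ∈ Sj j \ Tt j, (colS j t).card + ∑ t ∈ Tt j, (colS j t).card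
          = ∑ t ∈ Sj j, (colS j t).card := Finset.sum_sdiff hTsub
      have hT2 : 2 * (Tt j).card ≤ ∑ t ∈ Tt j, (colS j t).card := by
        calc 2 * (Tt j).card = (Tt j).card * 2 := by ring
          _ ≤ _ := by
              rw [← smul_eq_mul]
              exact Finset.card_nsmul_le_sum _ _ _ (fun t ht => hcol2 j t ht)
      have hrest : 1 ≤ ∑ t ∈ Sj j \ Tt j, (colS j t).card := by
        obtain ⟨t0, ht0⟩ := hsd
        calc 1 ≤ (colS j t0).card := hcol1 j t0 (Finset.mem_sdiff.1 ht0).1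
          _ ≤ _ := Finset.single_le_sum (f := fun t => (colS j t).card) (fun t _ => Nat.zero_le _) ht0
      have hv : 2 * (Tt j).card + 1 ≤ vF j := by
        rw [hvcol j]
        omega
      rw [hQeq]
      omega
  -- zero contributions outside fractional groups
  set Gf : Finset (Fin n) := univ.filter (fun j => (Sj j).Nonempty) with hGf
  have hkF0 : ∀ j ∉ Gf, kF j = 0 := by
    intro j hj
    rw [hGf, Finset.mem_filter] at hj
    push_neg at hj
    have hjne := Finset.not_nonempty_iff_eq_empty.2 (hj (Finset.mem_univ j))
    rw [hkF]
    simp only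
    rw [Finset.card_eq_zero]
    ext ℓ
    simp only [Finset.mem_filter, Finset.notMem_empty, iff_false]
    rintro ⟨hℓFI, hg⟩
    obtain ⟨t, hfrt⟩ := (hmemFI ℓ).1 hℓFI
    exact hjne ⟨t, (hmemSj j t).2 ⟨ℓ, hg, hfrt⟩⟩
  have hQj0 : ∀ j ∉ Gf, (Qj j).card = 0 := by
    intro j hj
    rw [hGf, Finset.mem_filter] at hj
    push_neg at hj
    have hjne := Finset.not_nonempty_iff_eq_empty.2 (hj (Finset.mem_univ j))
    have hSe : Sj j = ∅ := Finset.not_nonempty_iff_eq_empty.1 hjne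
    have hc : ¬(Tt j = Sj j ∧ (Sj j).Nonempty) := fun h => hjne h.2
    simp only [hQjdef]
    rw [dif_neg hc]
    simp only [hTtdef]
    rw [hSe]
    simp
  have hkFsub : ∑ j ∈ Gf, kF j = ∑ j, kF j :=
    Finset.sum_subset (Finset.subset_univ _) (fun j _ hj => hkF0 j hj)
  have hQjsub : ∑ j ∈ Gf, (Qj j).card = ∑ j, (Qj j).card :=
    Finset.sum_subset (Finset.subset_univ _) (fun j _ hj => hQj0 j hj)
  have hvFsub : ∑ j ∈ Gf, vF j ≤ ∑ j, vF j :=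
    Finset.sum_le_sum_of_subset (Finset.subset_univ _)
  -- chain 1 : few fractional groups
  have hsum1 : ∑ j ∈ Gf, kF j + ∑ j ∈ Gf, (Qj j).card + Gf.card ≤ V.card := by
    have := Finset.sum_le_sum (s := Gf) (f := fun j => kF j + (Qj j).card + 1) (g := vF)
      (fun j hj => hkey j (Finset.mem_filter.1 hj).2)
    rw [Finset.sum_add_distrib, Finset.sum_add_distrib, Finset.sum_const, smul_eq_mul,
      mul_one] at this
    calc ∑ j ∈ Gf, kF j + ∑ j ∈ Gf, (Qj j).card + Gf.card ≤ ∑ j ∈ Gf, vF j := this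
      _ ≤ ∑ j, vF j := hvFsub
      _ = V.card := hVsum.symm
  have hGfcard : Gf.card ≤ cT := by
    have h1 : V.card ≤ cT + (∑ j ∈ Gf, kF j + ∑ j ∈ Gf, (Qj j).card) := by
      rw [hkFsub, hQjsub, ← hFIsum, ← hQsum]
      exact hcard
    omega
  -- chain 2 : bound on the number of fractional items
  have hQjT : ∀ j, (Qj j).card ≤ cT := fun j => by
    calc (Qj j).card ≤ (univ : Finset T).card := Finset.card_le_univ _
      _ = cT := Finset.card_univ
  have hsum2 : 2 * ∑ j ∈ Gf, kF j + ∑ j ∈ Gf, (Qj j).card ≤ ∑ j ∈ Gf, vF j + Gf.card * cT := by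
    have h1 : ∀ j ∈ Gf, 2 * kF j + (Qj j).card ≤ vF j + cT := by
      intro j _
      have := hvrow j
      have := hQjT j
      omega
    have := Finset.sum_le_sum h1
    rw [Finset.sum_add_distrib, Finset.sum_add_distrib, Finset.sum_const, smul_eq_mul] at this
    calc 2 * ∑ j ∈ Gf, kF j + ∑ j ∈ Gf, (Qj j).card
        = ∑ j ∈ Gf, 2 * kF j + ∑ j ∈ Gf, (Qj j).card := by rw [Finset.mul_sum]
      _ ≤ ∑ j ∈ Gf, vF j + Gf.card * cT := this
  have hF : FI.card ≤ cT + cT * cT := by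
    have h1 : ∑ j ∈ Gf, vF j ≤ V.card := le_of_le_of_eq hvFsub hVsum.symm
    have h2 : V.card ≤ cT + (∑ j ∈ Gf, kF j + ∑ j ∈ Gf, (Qj j).card) := by
      rw [hkFsub, hQjsub, ← hFIsum, ← hQsum]
      exact hcard
    have h3 : Gf.card * cT ≤ cT * cT := Nat.mul_le_mul_right _ hGfcard
    have h4 : FI.card = ∑ j ∈ Gf, kF j := by rw [hkFsub, ← hFIsum]
    omega
  calc FI.card ≤ cT + cT * cT := hF
    _ ≤ 2 * cT ^ 2 := by nlinarith [hT1]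
end

section
/- GreedyPack correctness: let t be a set of |t| bins each with free capacity f(t) > 0, and let I_t be a set of small items partitioned into groups G^t_1,...,G^t_n with exactly |t| items per group (padding with size-0 items allowed). Suppose 0 < δ < 1/2, every item ℓ ∈ I_t has s_ℓ ≤ δ·f(t), and the total size S(I_t) ≤ (1−δ)·f(t)·|t|. Then there is an assignment of the items to the bins placing exactly one item from each group in each bin such that the total size in each bin is at most f(t). -/
open Finset

private def binload {I : Type*} [Fintype I] {M : ℕ} (s : I → ℝ) (π : I → Fin M) (c : Fin M) : ℝ :=
  ∑ i ∈ univ.filter (fun i => π i = c), s i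

private def phi {I : Type*} [Fintype I] {M : ℕ} (s : I → ℝ) (π : I → Fin M) : ℝ :=
  ∑ c, (binload s π c) ^ 2

private lemma exists_valid {I : Type*} [Fintype I] {n M : ℕ} (grp : I → Fin n)
    (hgrpcard : ∀ j : Fin n, (univ.filter (fun i => grp i = j)).card = M) :
    ∃ π : I → Fin M, ∀ (j : Fin n) (b : Fin M),
      (univ.filter (fun i => grp i = j ∧ π i = b)).card = 1 := by
  classical
  have hcard : ∀ j : Fin n, Fintype.card {i : I // grp i = j} = M := fun j => by
    rw [Fintype.card_subtype]; exact hgrpcard j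
  let e : ∀ j : Fin n, {i : I // grp i = j} ≃ Fin M :=
    fun j => Fintype.equivFinOfCardEq (hcard j)
  refine ⟨fun i => e (grp i) ⟨i, rfl⟩, fun j b => ?_⟩
  have key : ∀ (i : I) (h : grp i = j), (e (grp i) ⟨i, rfl⟩ : Fin M) = e j ⟨i, h⟩ := by
    intro i h; subst h; rfl
  have hset : univ.filter (fun i => grp i = j ∧ (e (grp i) ⟨i, rfl⟩ : Fin M) = b)
      = {((e j).symm b).1} := by
    ext i
    simp only [mem_filter, mem_univ, true_and, mem_singleton]
    constructor
    · rintro ⟨h1, h2⟩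
      rw [key i h1] at h2
      have h3 := (e j).symm_apply_apply ⟨i, h1⟩
      rw [h2] at h3
      exact congrArg Subtype.val h3.symm
    · rintro rfl
      refine ⟨((e j).symm b).2, ?_⟩
      rw [key _ ((e j).symm b).2]
      have h4 : (⟨((e j).symm b).1, ((e j).symm b).2⟩ : {i // grp i = j}) = (e j).symm b := rfl
      rw [h4, (e j).apply_symm_apply]
  rw [hset, card_singleton]

private lemma load_decomp {I : Type*} [Fintype I] {n M : ℕ} (grp : I → Fin n) (s : I → ℝ)
    (π : I → Fin M) (c : Fin M) :
    binload s π c = ∑ j : Fin n, ∑ i ∈ univ.filter (fun i => grp i = j ∧ π i = c), s i := by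
  classical
  unfold binload
  rw [← Finset.sum_fiberwise (univ.filter (fun i => π i = c)) grp s]
  refine Finset.sum_congr rfl fun j _ => Finset.sum_congr ?_ fun _ _ => rfl
  rw [Finset.filter_filter]
  exact Finset.filter_congr fun i _ => by tauto

/-- GreedyPack correctness: let `t` be a set of `M` bins each with free capacity `f > 0`,
and let the items be partitioned into groups `G_1,…,G_n` with exactly `M` items per group
(padding with size-0 dummy items is allowed).  Suppose `0 < δ < 1/2`, every item `ℓ` has
`s ℓ ≤ δ·f`, and the total size of the items is at most `(1−δ)·f·M`.  Then there is an
assignment of the items to the bins placing exactly one item of each group in each bin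
such that the total size packed in each bin is at most `f`. -/
theorem stmt_11 {I : Type*} [Fintype I] (n M : ℕ)
    (grp : I → Fin n) (s : I → ℝ) (f δ : ℝ)
    (hf : 0 < f) (hδ : 0 < δ ∧ δ < 1 / 2)
    (hs0 : ∀ i, 0 ≤ s i) (hssmall : ∀ i, s i ≤ δ * f)
    (hgrpcard : ∀ j : Fin n, (univ.filter (fun i => grp i = j)).card = M)
    (htot : ∑ i, s i ≤ (1 - δ) * f * M) :
    ∃ π : I → Fin M,
      (∀ (j : Fin n) (b : Fin M),
        (univ.filter (fun i => grp i = j ∧ π i = b)).card = 1) ∧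
      (∀ b : Fin M, ∑ i ∈ univ.filter (fun i => π i = b), s i ≤ f) := by
  classical
  obtain ⟨hδ0, hδhalf⟩ := hδ
  rcases Nat.eq_zero_or_pos M with hM | hM
  · subst hM
    have hI : IsEmpty I := by
      by_contra h
      rw [not_isEmpty_iff] at h
      obtain ⟨i⟩ := h
      have h1 := hgrpcard (grp i)
      have h2 : i ∈ univ.filter (fun i' => grp i' = grp i) := by simp
      rw [Finset.card_eq_zero] at h1
      rw [h1] at h2
      exact absurd h2 (Finset.notMem_empty i)
    exact ⟨fun i => isEmptyElim i, fun j b => isEmptyElim b, fun b => isEmptyElim b⟩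
  -- choose a valid assignment minimizing the potential
  obtain ⟨π₀, hπ₀⟩ := exists_valid grp hgrpcard
  set V : Finset (I → Fin M) := univ.filter (fun π => ∀ (j : Fin n) (b : Fin M),
      (univ.filter (fun i => grp i = j ∧ π i = b)).card = 1) with hVdef
  have hV0 : π₀ ∈ V := by simp only [hVdef, mem_filter, mem_univ, true_and]; exact hπ₀
  obtain ⟨π, hπV, hmin⟩ := V.exists_min_image (phi s) ⟨π₀, hV0⟩
  have hπ : ∀ (j : Fin n) (b : Fin M),
      (univ.filter (fun i => grp i = j ∧ π i = b)).card = 1 := by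
    simpa only [hVdef, mem_filter, mem_univ, true_and] using hπV
  refine ⟨π, hπ, ?_⟩
  by_contra hbad
  push_neg at hbad
  obtain ⟨b, hb⟩ := hbad
  change f < binload s π b at hb
  -- total load
  have htotload : ∑ c, binload s π c = ∑ i, s i := by
    unfold binload
    exact Finset.sum_fiberwise univ π s
  -- least loaded bin
  obtain ⟨b', _, hb'min⟩ := Finset.exists_min_image (univ : Finset (Fin M)) (binload s π)
    ⟨b, mem_univ b⟩
  have hb'small : binload s π b' ≤ (1 - δ) * f := by
    have h1 : (M : ℝ) * binload s π b' ≤ ∑ c, binload s π c := by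
      have := Finset.card_nsmul_le_sum (univ : Finset (Fin M)) (binload s π)
        (binload s π b') (fun c hc => hb'min c hc)
      simpa [nsmul_eq_mul] using this
    have hMpos : (0 : ℝ) < M := by exact_mod_cast hM
    nlinarith [htot, htotload]
  have hbb' : b ≠ b' := by
    intro h
    rw [h] at hb
    nlinarith
  -- unique item of each group in each bin
  have hpickex : ∀ (j : Fin n) (c : Fin M),
      ∃ x, univ.filter (fun i => grp i = j ∧ π i = c) = {x} :=
    fun j c => Finset.card_eq_one.mp (hπ j c)
  choose pick hpickspec using hpickex
  have hpickmem : ∀ j c, grp (pick j c) = j ∧ π (pick j c) = c := by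
    intro j c
    have : pick j c ∈ univ.filter (fun i => grp i = j ∧ π i = c) := by
      rw [hpickspec]; exact mem_singleton_self _
    simpa using this
  have hload : ∀ c, binload s π c = ∑ j : Fin n, s (pick j c) := by
    intro c
    rw [load_decomp grp s π c]
    refine Finset.sum_congr rfl fun j _ => ?_
    rw [hpickspec, Finset.sum_singleton]
  -- find a group where bin b's item is strictly larger
  have hsumlt : ∑ j : Fin n, s (pick j b') < ∑ j : Fin n, s (pick j b) := by
    rw [← hload, ← hload]
    nlinarith
  obtain ⟨j, _, hjlt⟩ := Finset.exists_lt_of_sum_lt hsumlt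
  set x := pick j b with hxdef
  set y := pick j b' with hydef
  have hgx : grp x = j := (hpickmem j b).1
  have hπx : π x = b := (hpickmem j b).2
  have hgy : grp y = j := (hpickmem j b').1
  have hπy : π y = b' := (hpickmem j b').2
  have hxy : x ≠ y := fun h => hbb' (by rw [← hπx, h, hπy])
  set σ := Equiv.swap x y with hσdef
  have hσσ : ∀ i, σ (σ i) = i := fun i => Equiv.swap_apply_self x y i
  have hgσ : ∀ i, grp (σ i) = grp i := by
    intro i
    rcases eq_or_ne i x with rfl | hx
    · rw [hσdef, Equiv.swap_apply_left, hgy, hgx]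
    rcases eq_or_ne i y with rfl | hy
    · rw [hσdef, Equiv.swap_apply_right, hgx, hgy]
    · rw [hσdef, Equiv.swap_apply_of_ne_of_ne hx hy]
  set π' : I → Fin M := fun i => π (σ i) with hπ'def
  -- π' is valid
  have hπ'valid : ∀ (j' : Fin n) (c : Fin M),
      (univ.filter (fun i => grp i = j' ∧ π' i = c)).card = 1 := by
    intro j' c
    rw [← hπ j' c]
    apply Finset.card_bij' (fun i _ => σ i) (fun i _ => σ i)
    · intro i hi
      simp only [mem_filter, mem_univ, true_and] at hi ⊢
      exact ⟨by rw [hgσ]; exact hi.1, hi.2⟩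
    · intro i hi
      simp only [mem_filter, mem_univ, true_and] at hi ⊢
      refine ⟨by rw [hgσ]; exact hi.1, ?_⟩
      show π (σ (σ i)) = c
      rw [hσσ]; exact hi.2
    · intro i _; exact hσσ i
    · intro i _; exact hσσ i
  -- loads of π'
  have hloadreindex : ∀ c, binload s π' c = ∑ i ∈ univ.filter (fun i => π i = c), s (σ i) := by
    intro c
    unfold binload
    apply Finset.sum_bij' (fun i _ => σ i) (fun i _ => σ i)
    · intro i hi
      simp only [mem_filter, mem_univ, true_and] at hi ⊢
      exact hi
    · intro i hi
      simp only [mem_filter, mem_univ, true_and] at hi ⊢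
      show π (σ (σ i)) = c
      rw [hσσ]; exact hi
    · intro i _; exact hσσ i
    · intro i _; exact hσσ i
    · intro i _
      show s i = s (σ (σ i))
      rw [hσσ]
  have hloadsame : ∀ c, c ≠ b → c ≠ b' → binload s π' c = binload s π c := by
    intro c hcb hcb'
    rw [hloadreindex]
    unfold binload
    refine Finset.sum_congr rfl fun i hi => ?_
    simp only [mem_filter, mem_univ, true_and] at hi
    have hix : i ≠ x := fun h => hcb (by rw [← hi, h, hπx])
    have hiy : i ≠ y := fun h => hcb' (by rw [← hi, h, hπy])
    rw [hσdef, Equiv.swap_apply_of_ne_of_ne hix hiy]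
  have hloadb : binload s π' b = binload s π b - s x + s y := by
    rw [hloadreindex]
    have hxmem : x ∈ univ.filter (fun i => π i = b) := by simp [hπx]
    have hbinb : binload s π b
        = ∑ i ∈ (univ.filter (fun i => π i = b)).erase x, s i + s x :=
      (Finset.sum_erase_add _ s hxmem).symm
    rw [← Finset.sum_erase_add _ _ hxmem, hbinb]
    have hσx : σ x = y := Equiv.swap_apply_left x y
    rw [hσx]
    have : ∑ i ∈ (univ.filter (fun i => π i = b)).erase x, s (σ i)
        = ∑ i ∈ (univ.filter (fun i => π i = b)).erase x, s i := by
      refine Finset.sum_congr rfl fun i hi => ?_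
      obtain ⟨hix, hi⟩ := Finset.mem_erase.mp hi
      simp only [mem_filter, mem_univ, true_and] at hi
      have hiy : i ≠ y := fun h => hbb' (by rw [← hi, h, hπy])
      rw [hσdef, Equiv.swap_apply_of_ne_of_ne hix hiy]
    rw [this]; ring
  have hloadb' : binload s π' b' = binload s π b' + s x - s y := by
    rw [hloadreindex]
    have hymem : y ∈ univ.filter (fun i => π i = b') := by simp [hπy]
    have hbinb' : binload s π b'
        = ∑ i ∈ (univ.filter (fun i => π i = b')).erase y, s i + s y :=
      (Finset.sum_erase_add _ s hymem).symm
    rw [← Finset.sum_erase_add _ _ hymem, hbinb']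
    have hσy : σ y = x := Equiv.swap_apply_right x y
    rw [hσy]
    have : ∑ i ∈ (univ.filter (fun i => π i = b')).erase y, s (σ i)
        = ∑ i ∈ (univ.filter (fun i => π i = b')).erase y, s i := by
      refine Finset.sum_congr rfl fun i hi => ?_
      obtain ⟨hiy, hi⟩ := Finset.mem_erase.mp hi
      simp only [mem_filter, mem_univ, true_and] at hi
      have hix : i ≠ x := fun h => hbb' (by rw [← hπx, ← h, hi])
      rw [hσdef, Equiv.swap_apply_of_ne_of_ne hix hiy]
    rw [this]; ring
  -- potential strictly decreases
  have hphidiff : phi s π' - phi s π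
      = ((binload s π' b) ^ 2 - (binload s π b) ^ 2)
        + ((binload s π' b') ^ 2 - (binload s π b') ^ 2) := by
    unfold phi
    rw [← Finset.sum_sub_distrib]
    rw [show ∑ c : Fin M, ((binload s π' c) ^ 2 - (binload s π c) ^ 2)
        = ∑ c ∈ ({b, b'} : Finset (Fin M)),
            ((binload s π' c) ^ 2 - (binload s π c) ^ 2) from
      (Finset.sum_subset (Finset.subset_univ _) (by
        intro c _ hc
        simp only [mem_insert, mem_singleton] at hc
        push_neg at hc
        rw [hloadsame c hc.1 hc.2]; ring)).symm]
    rw [Finset.sum_pair hbb']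
  have hd0 : 0 < s x - s y := by linarith
  have hdsmall : s x - s y ≤ δ * f := by
    have := hssmall x
    have := hs0 y
    linarith
  have hgap : δ * f < binload s π b - binload s π b' := by nlinarith
  have hphidec : phi s π' < phi s π := by
    have h1 := hloadb
    have h2 := hloadb'
    nlinarith [hphidiff]
  have hπ'V : π' ∈ V := by
    simp only [hVdef, mem_filter, mem_univ, true_and]
    exact hπ'valid
  have := hmin π' hπ'V
  linarith
end

section
/- If the total size of items discarded by GreedyPack due to small–large conflicts within small groups exceeded ε·OPT, then—since each discarded small item of size s is coupled to a distinct packed large item of the same group of size at least s/ε—the total size of those large items would exceed OPT, contradicting that OPT bounds the total size of the instance. Hence the total size of items discarded due to such conflicts is at most ε·OPT. -/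
/-- Coupling argument: each discarded small item `d ∈ D` is coupled (injectively) to a
packed large item `c d` of the same group with `s (c d) ≥ s d / ε`.  Since the total size
of all items is at most `OPT` (they all fit in `OPT` unit bins), the total size of the
discarded items is at most `ε·OPT`. -/
theorem stmt_13 {I : Type*} [Fintype I] (s : I → ℝ) (hs : ∀ i, 0 < s i ∧ s i ≤ 1)
    (grp : I → ℕ) (ε OPT : ℝ) (hε : 0 < ε ∧ ε < 1)
    (D : Finset I) (c : I → I)
    (hinj : Set.InjOn c D)
    (hcsize : ∀ d ∈ D, s d / ε ≤ s (c d))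
    (hcgrp : ∀ d ∈ D, grp (c d) = grp d)
    (htot : ∑ i, s i ≤ OPT) :
    ∑ d ∈ D, s d ≤ ε * OPT := by
  classical
  obtain ⟨hε0, hε1⟩ := hε
  have h1 : ∑ d ∈ D, s d ≤ ∑ d ∈ D, ε * s (c d) := by
    refine Finset.sum_le_sum fun d hd => ?_
    have := hcsize d hd
    rw [div_le_iff₀ hε0] at this
    linarith [this]
  have h2 : ∑ d ∈ D, ε * s (c d) = ε * ∑ d ∈ D, s (c d) := by
    rw [Finset.mul_sum]
  have h3 : ∑ d ∈ D, s (c d) = ∑ i ∈ D.image c, s i :=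
    (Finset.sum_image fun x hx y hy h => hinj hx hy h).symm
  have h4 : ∑ i ∈ D.image c, s i ≤ ∑ i, s i :=
    Finset.sum_le_sum_of_subset_of_nonneg (Finset.subset_univ _)
      (fun i _ _ => (hs i).1.le)
  calc ∑ d ∈ D, s d ≤ ε * ∑ d ∈ D, s (c d) := by rw [← h2]; exact h1
    _ ≤ ε * OPT := by
        have : ∑ d ∈ D, s (c d) ≤ OPT := by rw [h3]; linarith
        exact mul_le_mul_of_nonneg_left this hε0.le
end

section
/- Lower bound example for greedy packing in GBP: for every ε ∈ (0,1) with 1/ε ∈ ℕ and every N̂ ∈ ℕ with ε·N̂ ∈ ℕ, there is a GBP instance with optimal value OPT = N̂ (an optimal packing uses N̂ full unit bins, each containing four items of size 1/5, one item of the special group of size ε/5, and 1/ε − 1 singleton items of size ε/5) on which a packing that first packs the large items optimally and then adds the small singleton items greedily before the N̂ items of the special group uses (2−ε)·N̂ bins. -/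
open Finset

/-- Items of the lower-bound GBP instance (with `ε = 1/e` and `N̂ = e·M`):
`4N̂` singleton-group items of size `1/5`, `N̂·(e−1)` singleton-group items of size
`ε/5 = 1/(5e)`, and one special group `G` of `N̂` items of size `1/(5e)`. -/
abbrev GBPItem (e M : ℕ) :=
  Fin (4 * (e * M)) ⊕ (Fin ((e * M) * (e - 1)) ⊕ Fin (e * M))

/-- Item sizes of the lower-bound instance. -/
noncomputable def gbpSize (e M : ℕ) : GBPItem e M → ℝ :=
  Sum.elim (fun _ => 1 / 5) (Sum.elim (fun _ => 1 / (5 * (e : ℝ))) (fun _ => 1 / (5 * (e : ℝ))))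

/-- A packing of the items into `B` unit-capacity bins is feasible for GBP if every
bin's total size is at most `1` and no bin contains two items of the special group `G`
(all other groups are singletons). -/
def gbpFeasible (e M B : ℕ) (π : GBPItem e M → Fin B) : Prop :=
  (∀ b : Fin B, ∑ i ∈ univ.filter (fun i => π i = b), gbpSize e M i ≤ 1) ∧
  (∀ b : Fin B,
    (univ.filter (fun i : Fin (e * M) => π (.inr (.inr i)) = b)).card ≤ 1)

/- ------------------ auxiliary lemmas ------------------ -/

private lemma div_eq_iff' (k b x : ℕ) (hk : 0 < k) :
    x / k = b ↔ k * b ≤ x ∧ x < k * b + k := by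
  constructor
  · rintro rfl
    have h1 := Nat.div_add_mod x k
    have h2 := Nat.mod_lt x hk
    omega
  · rintro ⟨h1, h2⟩
    exact Nat.div_eq_of_lt_le (by rwa [mul_comm]) (by rw [add_mul, mul_comm b k, one_mul]; omega)

private lemma card_filter_fin (m : ℕ) (p : ℕ → Prop) [DecidablePred p] :
    ((univ : Finset (Fin m)).filter (fun i : Fin m => p i.val)).card
      = ((Finset.range m).filter p).card := by
  have h : Finset.range m = Finset.Iio m := by
    ext x; simp [Finset.mem_range, Finset.mem_Iio]
  rw [h, ← Fin.map_valEmbedding_univ, Finset.filter_map, Finset.card_map]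
  rfl

private lemma card_filter_div (k n m b : ℕ) (hk : 0 < k) (hm : m = k * n) :
    ((univ : Finset (Fin m)).filter (fun i : Fin m => (i : ℕ) / k = b)).card
      = if b < n then k else 0 := by
  subst hm
  rw [card_filter_fin (k * n) (fun x => x / k = b)]
  by_cases hb : b < n
  · rw [if_pos hb]
    have hfe : (Finset.range (k * n)).filter (fun x => x / k = b)
        = Finset.Ico (k * b) (k * b + k) := by
      ext x
      simp only [mem_filter, mem_range, Finset.mem_Ico, div_eq_iff' k b x hk]
      constructor
      · rintro ⟨_, h⟩; exact h
      · intro h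
        have : k * (b + 1) ≤ k * n := Nat.mul_le_mul_left k hb
        refine ⟨?_, h⟩
        rw [mul_add, mul_one] at this
        omega
    rw [hfe, Nat.card_Ico]
    omega
  · rw [if_neg hb]
    have hfe : (Finset.range (k * n)).filter (fun x => x / k = b) = ∅ := by
      ext x
      simp only [mem_filter, mem_range, Finset.notMem_empty, iff_false, not_and,
        div_eq_iff' k b x hk]
      intro hx
      have : k * n ≤ k * b := Nat.mul_le_mul_left k (by omega)
      omega
    rw [hfe, Finset.card_empty]

private lemma card_filter_shift (n c b : ℕ) :
    ((univ : Finset (Fin n)).filter (fun g : Fin n => c + (g : ℕ) = b)).card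
      = if c ≤ b ∧ b < c + n then 1 else 0 := by
  rw [card_filter_fin n (fun x => c + x = b)]
  by_cases h : c ≤ b ∧ b < c + n
  · rw [if_pos h]
    have hfe : (Finset.range n).filter (fun g => c + g = b) = {b - c} := by
      ext x
      simp only [mem_filter, mem_range, Finset.mem_singleton]
      omega
    rw [hfe, Finset.card_singleton]
  · rw [if_neg h]
    have hfe : (Finset.range n).filter (fun g => c + g = b) = ∅ := by
      ext x
      simp only [mem_filter, mem_range, Finset.notMem_empty, iff_false, not_and]
      omega
    rw [hfe, Finset.card_empty]

private lemma binsum (e M B : ℕ) (π : GBPItem e M → Fin B) (b : Fin B) :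
    ∑ i ∈ univ.filter (fun i => π i = b), gbpSize e M i
      = ((univ.filter (fun i : Fin (4 * (e * M)) => π (.inl i) = b)).card : ℝ) / 5
      + (((univ.filter (fun j : Fin ((e * M) * (e - 1)) => π (.inr (.inl j)) = b)).card : ℝ)
        + ((univ.filter (fun g : Fin (e * M) => π (.inr (.inr g)) = b)).card : ℝ))
          / (5 * (e : ℝ)) := by
  rw [Finset.sum_filter, Fintype.sum_sum_type, Fintype.sum_sum_type]
  simp only [gbpSize, Sum.elim_inl, Sum.elim_inr]
  rw [← Finset.sum_filter, ← Finset.sum_filter, ← Finset.sum_filter]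
  simp only [Finset.sum_const, nsmul_eq_mul]
  ring

private lemma totsum (e M : ℕ) :
    ∑ i : GBPItem e M, gbpSize e M i
      = ((4 * (e * M) : ℕ) : ℝ) / 5
        + (((e * M) * (e - 1) + e * M : ℕ) : ℝ) / (5 * (e : ℝ)) := by
  rw [Fintype.sum_sum_type, Fintype.sum_sum_type]
  simp only [gbpSize, Sum.elim_inl, Sum.elim_inr, Finset.sum_const, Finset.card_univ,
    Fintype.card_fin, nsmul_eq_mul]
  push_cast
  ring

/- ------------------ the two packings ------------------ -/

private def pack1 (e M : ℕ) (he : 2 ≤ e) : GBPItem e M → Fin (e * M) :=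
  Sum.elim
    (fun i => ⟨(i : ℕ) / 4, by have := i.isLt; omega⟩)
    (Sum.elim
      (fun j => ⟨(j : ℕ) / (e - 1), by
        have hj := j.isLt
        exact (Nat.div_lt_iff_lt_mul (by omega)).mpr hj⟩)
      (fun g => g))

private def pack3 (e M : ℕ) (he : 2 ≤ e) (hM : 1 ≤ M) :
    GBPItem e M → Fin (2 * (e * M) - M) :=
  Sum.elim
    (fun i => ⟨(i : ℕ) / 4, by
      have := i.isLt
      have hMn : M ≤ e * M := Nat.le_mul_of_pos_left M (by omega)
      omega⟩)
    (Sum.elim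
      (fun j => ⟨(j : ℕ) / e, by
        have hj := j.isLt
        have hMn : M ≤ e * M := Nat.le_mul_of_pos_left M (by omega)
        have hm' : (e * M) * (e - 1) = e * (e * M - M) := by
          rw [show e * M - M = (e - 1) * M from by rw [Nat.sub_mul, one_mul]]
          ring
        have hj2 : (j : ℕ) < (e * M - M) * e := by
          have h2 : (e * M) * (e - 1) = (e * M - M) * e := by rw [hm']; ring
          omega
        have : (j : ℕ) / e < e * M - M :=
          (Nat.div_lt_iff_lt_mul (by omega)).mpr hj2
        omega⟩)
      (fun g => ⟨(e * M - M) + (g : ℕ), by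
        have := g.isLt
        have hMn : M ≤ e * M := Nat.le_mul_of_pos_left M (by omega)
        omega⟩))

/- ------------------ the theorem ------------------ -/

/-- Lower bound example for greedy packing in GBP. -/
theorem stmt_19 (e M : ℕ) (he : 2 ≤ e) (hM : 1 ≤ M) :
    (∃ π : GBPItem e M → Fin (e * M), gbpFeasible e M (e * M) π) ∧
    (∀ (B : ℕ) (π : GBPItem e M → Fin B), gbpFeasible e M B π → e * M ≤ B) ∧
    (∃ π : GBPItem e M → Fin (2 * (e * M) - M),
      gbpFeasible e M (2 * (e * M) - M) π ∧
      Function.Surjective π ∧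
      (∀ b : Fin (2 * (e * M) - M),
        (univ.filter (fun i : Fin (4 * (e * M)) => π (Sum.inl i) = b)).card
          = if (b : ℕ) < e * M then 4 else 0) ∧
      (∀ b : Fin (2 * (e * M) - M), (b : ℕ) < e * M - M →
        (∑ i ∈ univ.filter (fun i => π i = b), gbpSize e M i = 1) ∧
        ∀ i : Fin (e * M), π (.inr (.inr i)) ≠ b)) := by
  have hMn : M ≤ e * M := Nat.le_mul_of_pos_left M (by omega)
  have he0 : (0 : ℝ) < (e : ℝ) := by exact_mod_cast (by omega : 0 < e)
  have heR : (2 : ℝ) ≤ (e : ℝ) := by exact_mod_cast he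
  have h1e : (1 : ℕ) ≤ e := by omega
  have hm' : (e * M) * (e - 1) = e * (e * M - M) := by
    rw [show e * M - M = (e - 1) * M from by rw [Nat.sub_mul, one_mul]]
    ring
  refine ⟨?_, ?_, ?_⟩
  · -- Part 1: feasible packing into e*M bins
    refine ⟨pack1 e M he, ?_, ?_⟩
    · intro b
      rw [binsum]
      have hA : (univ.filter (fun i : Fin (4 * (e * M)) => pack1 e M he (.inl i) = b)).card
          = 4 := by
        have h1 : (univ.filter (fun i : Fin (4 * (e * M)) => pack1 e M he (.inl i) = b))
            = univ.filter (fun i : Fin (4 * (e * M)) => (i : ℕ) / 4 = (b : ℕ)) := by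
          apply Finset.filter_congr
          intro i _
          simp [pack1, Fin.ext_iff]
        rw [h1, card_filter_div 4 (e * M) (4 * (e * M)) (b : ℕ) (by norm_num) rfl,
          if_pos b.isLt]
      have hB : (univ.filter
          (fun j : Fin ((e * M) * (e - 1)) => pack1 e M he (.inr (.inl j)) = b)).card
          = e - 1 := by
        have h1 : (univ.filter
            (fun j : Fin ((e * M) * (e - 1)) => pack1 e M he (.inr (.inl j)) = b))
            = univ.filter (fun j : Fin ((e * M) * (e - 1)) => (j : ℕ) / (e - 1) = (b : ℕ)) := by
          apply Finset.filter_congr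
          intro j _
          simp [pack1, Fin.ext_iff]
        rw [h1, card_filter_div (e - 1) (e * M) ((e * M) * (e - 1)) (b : ℕ) (by omega)
          (mul_comm _ _), if_pos b.isLt]
      have hG : (univ.filter
          (fun g : Fin (e * M) => pack1 e M he (.inr (.inr g)) = b)).card = 1 := by
        have h1 : (univ.filter (fun g : Fin (e * M) => pack1 e M he (.inr (.inr g)) = b))
            = {b} := by
          ext g
          rw [Finset.mem_filter, Finset.mem_singleton]
          simp [pack1]
        rw [h1, Finset.card_singleton]
      rw [hA, hB, hG]
      apply le_of_eq
      push_cast [Nat.cast_sub h1e]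
      field_simp
      ring
    · intro b
      have h1 : (univ.filter (fun g : Fin (e * M) => pack1 e M he (.inr (.inr g)) = b))
          = {b} := by
        ext g
        rw [Finset.mem_filter, Finset.mem_singleton]
        simp [pack1]
      rw [h1, Finset.card_singleton]
  · -- Part 2: lower bound on number of bins
    rintro B π ⟨h1, -⟩
    have htot : ∑ i : GBPItem e M, gbpSize e M i = ((e * M : ℕ) : ℝ) := by
      rw [totsum]
      push_cast [Nat.cast_sub h1e]
      field_simp
      ring
    have hle : ((e * M : ℕ) : ℝ) ≤ (B : ℝ) := by
      rw [← htot, ← Finset.sum_fiberwise univ π (gbpSize e M)]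
      calc ∑ b : Fin B, ∑ i ∈ univ.filter (fun i => π i = b), gbpSize e M i
          ≤ ∑ _b : Fin B, (1 : ℝ) := Finset.sum_le_sum (fun b _ => h1 b)
        _ = (B : ℝ) := by simp
    exact_mod_cast hle
  · -- Part 3: the greedy packing into 2*(e*M) - M bins
    set c := e * M - M with hc
    refine ⟨pack3 e M he hM, ?_, ?_, ?_, ?_⟩
    all_goals
      have hAcard : ∀ b : Fin (2 * (e * M) - M),
          (univ.filter (fun i : Fin (4 * (e * M)) => pack3 e M he hM (.inl i) = b)).card
            = if (b : ℕ) < e * M then 4 else 0 := by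
        intro b
        have h1 : (univ.filter (fun i : Fin (4 * (e * M)) => pack3 e M he hM (.inl i) = b))
            = univ.filter (fun i : Fin (4 * (e * M)) => (i : ℕ) / 4 = (b : ℕ)) := by
          apply Finset.filter_congr
          intro i _
          simp [pack3, Fin.ext_iff]
        rw [h1, card_filter_div 4 (e * M) (4 * (e * M)) (b : ℕ) (by norm_num) rfl]
      have hBcard : ∀ b : Fin (2 * (e * M) - M),
          (univ.filter
            (fun j : Fin ((e * M) * (e - 1)) => pack3 e M he hM (.inr (.inl j)) = b)).card
            = if (b : ℕ) < c then e else 0 := by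
        intro b
        have h1 : (univ.filter
            (fun j : Fin ((e * M) * (e - 1)) => pack3 e M he hM (.inr (.inl j)) = b))
            = univ.filter (fun j : Fin ((e * M) * (e - 1)) => (j : ℕ) / e = (b : ℕ)) := by
          apply Finset.filter_congr
          intro j _
          simp [pack3, Fin.ext_iff]
        rw [h1, card_filter_div e c ((e * M) * (e - 1)) (b : ℕ) (by omega) hm']
      have hGcard : ∀ b : Fin (2 * (e * M) - M),
          (univ.filter
            (fun g : Fin (e * M) => pack3 e M he hM (.inr (.inr g)) = b)).card
            = if c ≤ (b : ℕ) ∧ (b : ℕ) < c + e * M then 1 else 0 := by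
        intro b
        have h1 : (univ.filter
            (fun g : Fin (e * M) => pack3 e M he hM (.inr (.inr g)) = b))
            = univ.filter (fun g : Fin (e * M) => c + (g : ℕ) = (b : ℕ)) := by
          apply Finset.filter_congr
          intro g _
          simp [pack3, Fin.ext_iff, hc]
        rw [h1, card_filter_shift (e * M) c (b : ℕ)]
      skip
    · -- feasibility
      constructor
      · intro b
        rw [binsum, hAcard b, hBcard b, hGcard b]
        have hblt := b.isLt
        rcases lt_or_ge (b : ℕ) c with hb1 | hb1
        · rw [if_pos (by omega : (b : ℕ) < e * M), if_pos hb1,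
            if_neg (by omega : ¬(c ≤ (b : ℕ) ∧ (b : ℕ) < c + e * M))]
          apply le_of_eq
          push_cast
          field_simp
          ring
        · rcases lt_or_ge (b : ℕ) (e * M) with hb2 | hb2
          · rw [if_pos hb2, if_neg (by omega),
              if_pos (by constructor <;> omega)]
            push_cast
            rw [div_add_div _ _ (by norm_num : (5 : ℝ) ≠ 0)
              (by positivity : 5 * (e : ℝ) ≠ 0), div_le_one (by positivity)]
            nlinarith [heR]
          · rw [if_neg (by omega), if_neg (by omega),
              if_pos (by constructor <;> omega)]
            push_cast
            rw [div_add_div _ _ (by norm_num : (5 : ℝ) ≠ 0)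
              (by positivity : 5 * (e : ℝ) ≠ 0), div_le_one (by positivity)]
            nlinarith [heR]
      · intro b
        rw [hGcard b]
        split_ifs <;> omega
    · -- surjectivity
      intro b
      have hblt := b.isLt
      rcases lt_or_ge (b : ℕ) (e * M) with hb | hb
      · refine ⟨Sum.inl ⟨4 * (b : ℕ), by omega⟩, ?_⟩
        apply Fin.ext
        show 4 * (b : ℕ) / 4 = (b : ℕ)
        omega
      · refine ⟨Sum.inr (Sum.inr ⟨(b : ℕ) - c, by omega⟩), ?_⟩
        apply Fin.ext
        show (e * M - M) + ((b : ℕ) - c) = (b : ℕ)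
        omega
    · -- large item counts
      exact hAcard
    · -- first c bins are full with no G item
      intro b hb
      have hblt := b.isLt
      constructor
      · rw [binsum, hAcard b, hBcard b, hGcard b]
        rw [if_pos (by omega : (b : ℕ) < e * M), if_pos hb,
          if_neg (by omega : ¬(c ≤ (b : ℕ) ∧ (b : ℕ) < c + e * M))]
        push_cast
        field_simp
        ring
      · intro g hgeq
        have : c + (g : ℕ) = (b : ℕ) := by
          have := congrArg Fin.val hgeq
          simpa [pack3, hc] using this
        omega
end
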